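/- arXiv:2511.15850 — 11 statements merged into one kernel-verified Lean document; each statement's English description precedes it below -/
import Mathlib

section
/- Let (e_k) be a sequence of positive integers indexed by k ≥ 1 such that e_1 ≥ 1 and 2^(e_k) > 10^(e_{k-1}) for all k ≥ 2. If N is a positive integer divisible by 2^(e_k) for some k ≥ 1, and N is not divisible by 10, then the number of nonzero digits in the decimal expansion of N is at least k. -/
/-!
Write `N = r + 10^(e (k-1)) * m` with `r = N % 10^(e (k-1))`. Since `2^(e k) > 10^(e (k-1))`
divides `N`, the high part `m` is nonzero and contributes at least one nonzero digit. The low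
part `r` is still divisible by `2^(e (k-1))` (a divisor of both `N` and `10^(e (k-1))`) and still
not divisible by `10` (as `e (k-1) ≥ 1`), so by induction it has at least `k - 1` nonzero digits.
-/

/-- Number of nonzero digits in the base-`b` expansion of `N`. -/
def countNonzeroDigits (b N : ℕ) : ℕ :=
  ((Nat.digits b N).filter (· ≠ 0)).length

section CountNonzeroDigits

variable {b : ℕ}

theorem countNonzeroDigits_pos {N : ℕ} (hN : N ≠ 0) : 0 < countNonzeroDigits b N := by
  have hne : Nat.digits b N ≠ [] := Nat.digits_ne_nil_iff_ne_zero.mpr hN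
  have hlast : (Nat.digits b N).getLast hne ∈ (Nat.digits b N).filter (· ≠ 0) :=
    List.mem_filter.mpr ⟨List.getLast_mem hne, by simpa using Nat.getLast_digit_ne_zero b hN⟩
  exact List.length_pos_of_mem hlast

theorem countNonzeroDigits_add_base_pow_mul (hb : 1 < b) {r d m : ℕ} (hr : r < b ^ d)
    (hm : 0 < m) :
    countNonzeroDigits b (r + b ^ d * m) = countNonzeroDigits b r + countNonzeroDigits b m := by
  have hlen : (Nat.digits b r).length ≤ d := (Nat.digits_length_le_iff hb r).mpr hr
  have hdigits := Nat.digits_append_zeroes_append_digits (k := d - (Nat.digits b r).length)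
    (n := r) hb hm
  rw [Nat.add_sub_cancel' hlen] at hdigits
  simp [countNonzeroDigits, ← hdigits, List.filter_append]

theorem countNonzeroDigits_mod_pow_lt (hb : 1 < b) {N d : ℕ} (h : b ^ d ≤ N) :
    countNonzeroDigits b (N % b ^ d) < countNonzeroDigits b N := by
  have hm : 0 < N / b ^ d := Nat.div_pos h (by positivity)
  conv_rhs => rw [← Nat.mod_add_div N (b ^ d)]
  rw [countNonzeroDigits_add_base_pow_mul hb (Nat.mod_lt _ (by positivity)) hm]
  exact Nat.lt_add_of_pos_right (countNonzeroDigits_pos hm.ne')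

end CountNonzeroDigits

theorem not_dvd_mod_pow {b N d : ℕ} (hd : d ≠ 0) (h : ¬ b ∣ N) : ¬ b ∣ N % b ^ d := by
  rwa [Nat.dvd_mod_iff (dvd_pow_self b hd)]

theorem stmt_0_general (e : ℕ → ℕ) (he1 : 1 ≤ e 1)
    (hstep : ∀ k ≥ 2, 2 ^ e k > 10 ^ e (k - 1))
    (N : ℕ) (k : ℕ) (hk : 1 ≤ k)
    (hdvd : 2 ^ e k ∣ N) (hnd : ¬ (10 ∣ N)) :
    countNonzeroDigits 10 N ≥ k := by
  have hN : N ≠ 0 := by rintro rfl; exact hnd (dvd_zero 10)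
  induction k, hk using Nat.le_induction generalizing N with
  | base => exact countNonzeroDigits_pos hN
  | succ k hk ih =>
    have hlt : 10 ^ e k < 2 ^ e (k + 1) := hstep (k + 1) (by omega)
    have he : e k ≠ 0 := by
      rcases (show k = 1 ∨ 2 ≤ k by omega) with rfl | hk2
      · omega
      · exact Nat.one_lt_two_pow_iff.mp
          ((Nat.one_le_pow _ _ (by norm_num)).trans_lt (hstep k hk2))
    have hmono : e k ≤ e (k + 1) :=
      ((Nat.pow_lt_pow_iff_right (by norm_num)).mp
        ((Nat.pow_le_pow_left (by norm_num) _).trans_lt hlt)).le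
    have hdvd_mod : 2 ^ e k ∣ N % 10 ^ e k :=
      (Nat.dvd_mod_iff (pow_dvd_pow_of_dvd (by norm_num) _)).mpr
        ((pow_dvd_pow 2 hmono).trans hdvd)
    have hnd_mod : ¬ 10 ∣ N % 10 ^ e k := not_dvd_mod_pow he hnd
    have hmod_ne : N % 10 ^ e k ≠ 0 := fun h0 => hnd_mod (h0 ▸ dvd_zero 10)
    have hle : 10 ^ e k ≤ N := hlt.le.trans (Nat.le_of_dvd (Nat.pos_of_ne_zero hN) hdvd)
    exact ((ih _ hdvd_mod hnd_mod hmod_ne).trans_lt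
      (countNonzeroDigits_mod_pow_lt (by norm_num) hle)).succ_le

theorem stmt_0 (e : ℕ → ℕ) (he1 : 1 ≤ e 1)
    (hstep : ∀ k ≥ 2, 2 ^ e k > 10 ^ e (k - 1))
    (N : ℕ) (hN : 0 < N) (k : ℕ) (hk : 1 ≤ k)
    (hdvd : 2 ^ e k ∣ N) (hnd : ¬ (10 ∣ N)) :
    countNonzeroDigits 10 N ≥ k :=
  stmt_0_general e he1 hstep N k hk hdvd hnd
end

section
/- Let a be a positive integer that is divisible by 2 but not divisible by 10. Then for every integer n > 1, the number of nonzero digits in the decimal expansion of a^n is at least log_4(n), i.e., c_10(a^n) ≥ (log n)/(log 4). -/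
/-!
Let `p ∣ b` and `b ≤ p ^ r`, and let `N` be a base-`b` numeral with `k` nonzero digits, the last
one nonzero, and `p ^ m ∣ N`. Split off the most significant digit, at position `L`: the rest is divisible
by `p ^ min m L` and is again not divisible by `b`, so by induction `min m L < r ^ (k - 1)`.
Either `m ≤ L`, or `p ^ m ≤ N < b ^ (L + 1) ≤ p ^ (r (L + 1))`; in both cases `m < r ^ k`.
For `b = 10`, `p = 2`, `r = 4` and `N = a ^ n` this gives `n < 4 ^ c₁₀(a ^ n)`.
-/

theorem lt_of_pow_dvd_of_lt_pow {p m N k : ℕ} (hp : 1 < p) (hN : N ≠ 0) (hdvd : p ^ m ∣ N)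
    (hlt : N < p ^ k) : m < k :=
  (Nat.pow_lt_pow_iff_right hp).1 ((Nat.le_of_dvd (Nat.pos_of_ne_zero hN) hdvd).trans_lt hlt)

theorem lt_pow_length_filter_ne_zero_of_pow_dvd_ofDigits {b p r : ℕ} (hb : 2 ≤ b) (hp : 1 < p)
    (hpb : p ∣ b) (hbr : b ≤ p ^ r) {l : List ℕ} (hl : ∀ d ∈ l, d < b)
    (hbl : ¬ b ∣ Nat.ofDigits b l) {m : ℕ} (hm : p ^ m ∣ Nat.ofDigits b l) :
    m < r ^ (l.filter (· ≠ 0)).length := by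
  induction l using List.reverseRecOn generalizing m with
  | nil => simp at hbl
  | append_singleton l d ih =>
    have hl' : ∀ x ∈ l, x < b := fun x hx => hl x (by simp [hx])
    have hNlt : Nat.ofDigits b (l ++ [d]) < b ^ (l.length + 1) := by
      simpa using Nat.ofDigits_lt_base_pow_length hb hl
    rw [Nat.ofDigits_append, Nat.ofDigits_singleton] at hbl hm hNlt
    rw [List.filter_append, List.length_append]
    by_cases hd : d = 0
    · subst hd
      simpa using ih hl' (by simpa using hbl) (by simpa using hm)
    simp only [List.filter_singleton, hd, ne_eq, not_false_eq_true, decide_true, List.length_cons,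
      List.length_nil, zero_add, cond_true]
    have hr : 0 < r := Nat.pos_of_ne_zero fun hr => by simp [hr] at hbr; omega
    rcases eq_or_ne l [] with rfl | hne
    · have hdb : d < b := hl d (by simp)
      simp only [Nat.ofDigits_nil, List.length_nil, pow_zero, one_mul, zero_add] at hm ⊢
      simpa using lt_of_pow_dvd_of_lt_pow hp hd hm (hdb.trans_le hbr)
    set c := (l.filter (· ≠ 0)).length
    set L := l.length
    have hL : b ∣ b ^ L * d := (dvd_pow_self b (List.length_pos_iff.2 hne).ne').mul_right d
    have hpL : p ^ min m L ∣ b ^ L * d :=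
      ((pow_dvd_pow p (min_le_right m L)).trans (pow_dvd_pow_of_dvd hpb L)).mul_right d
    have hrest : p ^ min m L ∣ Nat.ofDigits b l :=
      (Nat.dvd_add_left hpL).1 ((pow_dvd_pow p (min_le_left m L)).trans hm)
    have ih' := ih hl' (fun h => hbl ((Nat.dvd_add_left hL).2 h)) hrest
    rcases le_or_gt m L with hmL | hLm
    · rw [min_eq_left hmL] at ih'
      exact ih'.trans_le (Nat.pow_le_pow_right hr c.le_succ)
    · rw [min_eq_right hLm.le] at ih'
      have hN0 : Nat.ofDigits b l + b ^ L * d ≠ 0 := by positivity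
      have hmr : m < r * (L + 1) := lt_of_pow_dvd_of_lt_pow hp hN0 hm <| by
        calc _ < b ^ (L + 1) := hNlt
          _ ≤ (p ^ r) ^ (L + 1) := Nat.pow_le_pow_left hbr _
          _ = p ^ (r * (L + 1)) := (pow_mul p r _).symm
      calc m < r * (L + 1) := hmr
        _ ≤ r * r ^ c := Nat.mul_le_mul_left r ih'
        _ = r ^ (c + 1) := (pow_succ' r c).symm

theorem lt_pow_countNonzeroDigits_of_pow_dvd {b p r N m : ℕ} (hb : 2 ≤ b) (hp : 1 < p)
    (hpb : p ∣ b) (hbr : b ≤ p ^ r) (hbN : ¬ b ∣ N) (hm : p ^ m ∣ N) :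
    m < r ^ countNonzeroDigits b N := by
  rw [← Nat.ofDigits_digits b N] at hbN hm
  exact lt_pow_length_filter_ne_zero_of_pow_dvd_ofDigits hb hp hpb hbr
    (fun _ => Nat.digits_lt_base hb) hbN hm

theorem Real.log_div_log_le_of_le_pow {k n c : ℕ} (h : n ≤ k ^ c) :
    Real.log n / Real.log k ≤ c := by
  rw [Real.log_div_log]
  calc Real.logb k n ≤ ⌈Real.logb k n⌉₊ := Nat.le_ceil _
    _ = Nat.clog k n := by rw [Real.natCeil_logb_natCast]
    _ ≤ c := by exact_mod_cast Nat.clog_le_of_le_pow h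

theorem stmt_1_general (a : ℕ) (h2 : 2 ∣ a) (h10 : ¬ (10 ∣ a))
    (n : ℕ) :
    (countNonzeroDigits 10 (a ^ n) : ℝ) ≥ Real.log n / Real.log 4 := by
  have h5 : ¬ 5 ∣ a := fun h5 => h10 (Nat.Coprime.mul_dvd_of_dvd_of_dvd (by norm_num) h2 h5)
  have h10n : ¬ 10 ∣ a ^ n := fun h =>
    h5 (Nat.prime_five.dvd_of_dvd_pow ((by norm_num : 5 ∣ 10).trans h))
  have hlt : n < 4 ^ countNonzeroDigits 10 (a ^ n) :=
    lt_pow_countNonzeroDigits_of_pow_dvd (p := 2) (by norm_num) (by norm_num) (by norm_num)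
      (by norm_num) h10n (pow_dvd_pow_of_dvd h2 n)
  exact_mod_cast Real.log_div_log_le_of_le_pow hlt.le

theorem stmt_1 (a : ℕ) (ha : 0 < a) (h2 : 2 ∣ a) (h10 : ¬ (10 ∣ a))
    (n : ℕ) (hn : 1 < n) :
    (countNonzeroDigits 10 (a ^ n) : ℝ) ≥ Real.log n / Real.log 4 :=
  stmt_1_general a h2 h10 n
end

section
/- Let a and b be integers with 2 ≤ a < b and a dividing b, and set r = log(b)/log(a). Then for every real constant C with 0 < C < 1/log(r), there exists a threshold n₀ (depending only on a, b, and C) such that for all integers n ≥ n₀ and every positive integer N divisible by a^n but not divisible by b, the number of nonzero digits in the base-b expansion of N satisfies c_b(N) > C · log(n). -/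
lemma count_step (b : ℕ) (hb : 1 < b) (N : ℕ) :
    countNonzeroDigits b N
      = countNonzeroDigits b (N / b) + if N % b = 0 then 0 else 1 := by
  rcases Nat.eq_zero_or_pos N with h | h
  · simp [h, countNonzeroDigits]
  · unfold countNonzeroDigits
    rw [Nat.digits_def' hb h, List.filter_cons]
    split_ifs with h1 h2 h2 <;> simp_all

lemma count_single (b d : ℕ) (hb : 1 < b) (h0 : 0 < d) (hd : d < b) :
    countNonzeroDigits b d = 1 := by
  unfold countNonzeroDigits
  rw [Nat.digits_def' hb h0, Nat.mod_eq_of_lt hd, Nat.div_eq_of_lt hd]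
  simp only [List.filter_cons]
  rw [if_pos (by simp; omega)]
  simp

lemma count_add (b : ℕ) (hb : 1 < b) (y : ℕ) : ∀ j x, x < b ^ j →
    countNonzeroDigits b (x + b ^ j * y)
      = countNonzeroDigits b x + countNonzeroDigits b y := by
  intro j
  induction j with
  | zero =>
    intro x hx
    have : x = 0 := by simpa using hx
    subst this
    simp [countNonzeroDigits]
  | succ j IH =>
    intro x hx
    have hb0 : 0 < b := by omega
    have hdiv : (x + b ^ (j+1) * y) / b = x / b + b ^ j * y := by
      have : x + b ^ (j+1) * y = x + b * (b ^ j * y) := by ring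
      rw [this, Nat.add_mul_div_left _ _ hb0]
    have hmod : (x + b ^ (j+1) * y) % b = x % b := by
      have h1 : b ∣ b ^ (j+1) * y := Dvd.dvd.mul_right (dvd_pow_self b (by omega)) y
      exact Nat.add_mul_mod_self_left x b (b^j*y) ▸ (by rw [(by ring : x + b ^ (j+1) * y = x + b * (b^j*y)), Nat.add_mul_mod_self_left])
    have hxb : x / b < b ^ j := by
      rw [Nat.div_lt_iff_lt_mul hb0]
      calc x < b ^ (j+1) := hx
        _ = b ^ j * b := by ring
    rw [count_step b hb (x + b ^ (j+1) * y), hdiv, hmod, IH _ hxb,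
      count_step b hb x]
    ring

lemma pow_dvd_lt_bound (a b : ℕ) (ha : 2 ≤ a) (hab : a < b) (r : ℝ)
    (hr : r = Real.log b / Real.log a) {m L M : ℕ} (hM : 0 < M)
    (hdvd : a ^ m ∣ M) (hlt : M < b ^ L) : (m : ℝ) < r * L := by
  have hla : (0:ℝ) < Real.log a := Real.log_pos (by exact_mod_cast ha)
  have hle : a ^ m ≤ M := Nat.le_of_dvd hM hdvd
  have h2 : ((a:ℝ)) ^ m < (b:ℝ) ^ L := by
    exact_mod_cast lt_of_le_of_lt hle hlt
  have h3 : (m:ℝ) * Real.log a < (L:ℝ) * Real.log b := by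
    have := Real.log_lt_log (by positivity) h2
    rwa [Real.log_pow, Real.log_pow] at this
  have hrb : r * Real.log a = Real.log b := by
    rw [hr]; field_simp
  have : (m:ℝ) * Real.log a < (r * L) * Real.log a := by
    calc (m:ℝ) * Real.log a < (L:ℝ) * Real.log b := h3
      _ = (r * L) * Real.log a := by rw [← hrb]; ring
  exact lt_of_mul_lt_mul_right this hla.le

lemma main_bound (a b : ℕ) (ha : 2 ≤ a) (hab : a < b) (hdvd : a ∣ b) (r : ℝ)
    (hr : r = Real.log b / Real.log a) :
    ∀ N, 0 < N → ¬ b ∣ N → ∀ n : ℕ, a ^ n ∣ N →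
      (n : ℝ) < (r ^ (countNonzeroDigits b N + 1) - r) / (r - 1) := by
  have hb : 1 < b := by omega
  have hla : (0:ℝ) < Real.log a := Real.log_pos (by exact_mod_cast ha)
  have hr1 : 1 < r := by
    rw [hr, lt_div_iff₀ hla]
    simpa using Real.log_lt_log (by positivity) (by exact_mod_cast hab)
  have hr0 : (0:ℝ) < r - 1 := by linarith
  intro N
  induction N using Nat.strong_induction_on with
  | _ N IH =>
    intro hN hbN n hdvdn
    set c := countNonzeroDigits b N with hc
    set j := Nat.log b N with hj
    have hjle : b ^ j ≤ N := Nat.pow_log_le_self b (by omega)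
    have hjlt : N < b ^ (j + 1) := Nat.lt_pow_succ_log_self hb N
    rcases Nat.eq_zero_or_pos j with hj0 | hj1
    · -- N < b, single digit
      have hNb : N < b := by simpa [hj0] using hjlt
      have hc1 : c = 1 := count_single b N hb hN hNb
      have : (n:ℝ) < r * 1 := by
        have := pow_dvd_lt_bound a b ha hab r hr hN hdvdn (by simpa : N < b ^ 1)
        simpa using this
      rw [hc1]
      rw [lt_div_iff₀ hr0]
      have hsq : r ^ (1+1) = r * r := by ring
      nlinarith
    · -- j ≥ 1
      set R := N % b ^ j with hR
      set d := N / b ^ j with hd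
      have hNRd : R + b ^ j * d = N := Nat.mod_add_div N (b ^ j)
      have hd1 : 1 ≤ d := (Nat.one_le_div_iff (by positivity)).mpr hjle
      have hdb : d < b := by
        rw [hd, Nat.div_lt_iff_lt_mul (by positivity)]
        calc N < b ^ (j+1) := hjlt
          _ = b * b ^ j := by ring
      have hRlt : R < b ^ j := Nat.mod_lt _ (by positivity)
      have hbj : b ∣ b ^ j := dvd_pow_self b (by omega)
      have hR0 : 0 < R := by
        rcases Nat.eq_zero_or_pos R with h0 | h0
        · exfalso
          apply hbN
          have : b ^ j ∣ N := Nat.dvd_of_mod_eq_zero h0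
          exact hbj.trans this
        · exact h0
      have hbR : ¬ b ∣ R := by
        intro hcon
        apply hbN
        have h2 : b ∣ b ^ j * d := hbj.mul_right d
        exact hNRd ▸ Nat.dvd_add hcon h2
      have hcount : c = countNonzeroDigits b R + 1 := by
        rw [hc, ← hNRd, count_add b hb d j R hRlt, count_single b d hb hd1 hdb]
      set m := min n j with hm
      have hdvdR : a ^ m ∣ R := by
        have h1 : a ^ m ∣ N := (pow_dvd_pow a (min_le_left n j)).trans hdvdn
        have h2 : a ^ m ∣ b ^ j * d := by
          have : a ^ m ∣ a ^ j := pow_dvd_pow a (min_le_right n j)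
          exact (this.trans (pow_dvd_pow_of_dvd hdvd j)).mul_right d
        have : R = N - b ^ j * d := by omega
        rw [this]
        exact Nat.dvd_sub h1 h2
      have hIH := IH R (lt_of_lt_of_le hRlt hjle) hR0 hbR m hdvdR
      rw [hcount]
      rcases le_or_gt n j with hnj | hnj
      · have hmn : m = n := min_eq_left hnj
        rw [hmn] at hIH
        apply lt_of_lt_of_le hIH
        rw [div_le_div_iff_of_pos_right hr0]
        have : r ^ (countNonzeroDigits b R + 1) ≤ r ^ (countNonzeroDigits b R + 1 + 1) :=
          pow_le_pow_right₀ (by linarith) (by omega)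
        linarith
      · have hmj : m = j := min_eq_right hnj.le
        rw [hmj] at hIH
        have hnr : (n:ℝ) < r * ((j:ℝ) + 1) := by
          have h5 := pow_dvd_lt_bound a b ha hab r hr hN hdvdn hjlt
          push_cast at h5
          linarith
        set k := countNonzeroDigits b R
        have : (j:ℝ) < (r ^ (k+1) - r)/(r-1) := hIH
        rw [lt_div_iff₀ hr0] at this ⊢
        have hrpos : (0:ℝ) < r := by linarith
        have hps : r ^ (k+1+1) = r ^ (k+1) * r := by ring
        nlinarith [mul_lt_mul_of_pos_right hnr hr0, mul_lt_mul_of_pos_left this hrpos]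

theorem stmt_3 (a b : ℕ) (ha : 2 ≤ a) (hab : a < b) (hdvd : a ∣ b)
    (r : ℝ) (hr : r = Real.log b / Real.log a)
    (C : ℝ) (hC0 : 0 < C) (hC : C < 1 / Real.log r) :
    ∃ n₀ : ℕ, ∀ n : ℕ, n ≥ n₀ → ∀ N : ℕ, 0 < N → a ^ n ∣ N → ¬ (b ∣ N) →
      (countNonzeroDigits b N : ℝ) > C * Real.log n := by
  have hla : (0:ℝ) < Real.log a := Real.log_pos (by exact_mod_cast ha)
  have hr1 : 1 < r := by
    rw [hr, lt_div_iff₀ hla]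
    simpa using Real.log_lt_log (by positivity) (by exact_mod_cast hab)
  have hr0 : (0:ℝ) < r - 1 := by linarith
  have hrpos : (0:ℝ) < r := by linarith
  have hlr : (0:ℝ) < Real.log r := Real.log_pos hr1
  have hε0 : (0:ℝ) < 1 - C * Real.log r := by
    rw [lt_div_iff₀ hlr] at hC
    linarith
  set K : ℝ := (Real.log r - Real.log (r-1)) / (1 - C * Real.log r) with hKdef
  have hεK : K * (1 - C * Real.log r) = Real.log r - Real.log (r-1) := by
    rw [hKdef]
    exact div_mul_cancel₀ _ hε0.ne'
  refine ⟨⌈Real.exp K⌉₊ + 1, ?_⟩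
  intro n hn N hN hdvdn hbN
  have hmain := main_bound a b ha hab hdvd r hr N hN hbN n hdvdn
  set c := countNonzeroDigits b N with hc
  have hexplt : Real.exp K < (n:ℝ) := by
    have h1 : Real.exp K ≤ (⌈Real.exp K⌉₊:ℝ) := Nat.le_ceil _
    have h2 : ((⌈Real.exp K⌉₊ + 1 : ℕ):ℝ) ≤ (n:ℝ) := by exact_mod_cast hn
    push_cast at h2
    linarith
  have hn0 : (0:ℝ) < (n:ℝ) := lt_trans (Real.exp_pos K) hexplt
  have hnK : K < Real.log n := by
    calc K = Real.log (Real.exp K) := (Real.log_exp K).symm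
      _ < Real.log n := Real.log_lt_log (Real.exp_pos K) hexplt
  have h2 : (n:ℝ) < r ^ (c+1) / (r-1) := by
    apply lt_of_lt_of_le hmain
    rw [div_le_div_iff_of_pos_right hr0]
    linarith
  have h3 : Real.log n < ((c:ℝ)+1) * Real.log r - Real.log (r-1) := by
    have h4 := Real.log_lt_log hn0 h2
    rw [Real.log_div (by positivity) (by linarith), Real.log_pow] at h4
    push_cast at h4
    linarith
  have p1 : K * (1 - C * Real.log r) < Real.log n * (1 - C * Real.log r) :=
    mul_lt_mul_of_pos_right hnK hε0
  have hfinal : C * Real.log n * Real.log r < (c:ℝ) * Real.log r := by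
    nlinarith [p1, hεK, h3]
  exact lt_of_mul_lt_mul_right hfinal hlr.le
end

section
/- Let a, b ≥ 2 be integers such that log(a)/log(b) is irrational. Then there exist a prime p dividing a and a real constant C > 0 (depending only on a and b) such that: whenever n, m are nonnegative integers and t ≥ 1 is an integer with a^n = b^m · t, the p-adic valuation of t satisfies ν_p(t) ≥ C·n. -/
/-!
Write `α_p, β_p` for the exponents of `p` in `a, b`. If `β_p log a ≥ α_p log b` held for every
`p ∣ a` (and so for every `p`), then multiplying by `log p` and summing would give
`log a · log b` on both sides, so equality would hold termwise and `log a / log b = α_p / β_p`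
would be rational for any `p ∣ a`. So some `p ∣ a` has `β_p / α_p < log b / log a`. Comparing
`p`-adic valuations in `a^n = b^m t` gives `ν_p(t) = n α_p - m β_p`, and `b^m ≤ a^n` gives
`m ≤ n log a / log b`, hence `ν_p(t) ≥ n (α_p log b - β_p log a) / log b`.
-/

open Real

theorem Real.log_natCast_eq_sum_factorization_of_subset {n : ℕ} {s : Finset ℕ}
    (hs : n.primeFactors ⊆ s) : log n = ∑ p ∈ s, n.factorization p * log p := by
  rw [log_nat_eq_sum_factorization]
  exact Finsupp.sum_of_support_subset _ (Nat.support_factorization n ▸ hs) _ (by simp)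

theorem factorization_mul_log_eq_of_forall_le {a b : ℕ}
    (h : ∀ p, a.factorization p * log b ≤ b.factorization p * log a) {p : ℕ}
    (hp : p ∈ a.primeFactors) : a.factorization p * log b = b.factorization p * log a := by
  set s := a.primeFactors ∪ b.primeFactors
  have hle : ∀ q ∈ s, a.factorization q * log q * log b ≤ b.factorization q * log q * log a :=
    fun q _ => by
      rw [mul_right_comm, mul_right_comm (b.factorization q : ℝ)]
      exact mul_le_mul_of_nonneg_right (h q) (log_natCast_nonneg q)
  have hsum : ∑ q ∈ s, a.factorization q * log q * log b
      = ∑ q ∈ s, b.factorization q * log q * log a := by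
    rw [← Finset.sum_mul, ← Finset.sum_mul,
      ← log_natCast_eq_sum_factorization_of_subset Finset.subset_union_left,
      ← log_natCast_eq_sum_factorization_of_subset Finset.subset_union_right, mul_comm]
  have hpq := (Finset.sum_eq_sum_iff_of_le hle).1 hsum p (Finset.mem_union_left _ hp)
  have hlogp : log p ≠ 0 :=
    (log_pos (by exact_mod_cast (Nat.prime_of_mem_primeFactors hp).one_lt)).ne'
  rw [mul_right_comm, mul_right_comm (b.factorization p : ℝ)] at hpq
  exact mul_right_cancel₀ hlogp hpq

theorem exists_prime_dvd_factorization_mul_log_lt {a b : ℕ} (ha : 2 ≤ a) (hb : 2 ≤ b)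
    (hirr : Irrational (log a / log b)) :
    ∃ p, p.Prime ∧ p ∣ a ∧ b.factorization p * log a < a.factorization p * log b := by
  by_contra! hge
  have hall : ∀ p, a.factorization p * log b ≤ b.factorization p * log a := by
    intro p
    by_cases hpa : p.Prime ∧ p ∣ a
    · exact hge p hpa.1 hpa.2
    · rw [(Nat.factorization_eq_zero_iff a p).2 (by tauto), Nat.cast_zero, zero_mul]
      exact mul_nonneg (Nat.cast_nonneg _) (log_natCast_nonneg a)
  obtain ⟨q, hq, hqa⟩ := Nat.exists_prime_and_dvd (show a ≠ 1 by omega)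
  have heq := factorization_mul_log_eq_of_forall_le hall
    (Nat.mem_primeFactors.2 ⟨hq, hqa, by omega⟩)
  have hlogb : 0 < log b := log_pos (by exact_mod_cast hb)
  have hαq : (0 : ℝ) < a.factorization q := by
    exact_mod_cast hq.factorization_pos_of_dvd (by omega) hqa
  have hβq : (b.factorization q : ℝ) ≠ 0 := by
    rintro hβ
    rw [hβ, zero_mul] at heq
    exact (mul_pos hαq hlogb).ne' heq
  refine hirr ⟨a.factorization q / b.factorization q, ?_⟩
  push_cast
  rw [div_eq_div_iff hβq hlogb.ne']
  linarith

theorem factorization_eq_of_pow_eq_pow_mul {a b t n m : ℕ} (p : ℕ) (hb : b ≠ 0) (ht : t ≠ 0)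
    (h : a ^ n = b ^ m * t) :
    n * a.factorization p = m * b.factorization p + t.factorization p := by
  simpa [Nat.factorization_pow, Nat.factorization_mul (pow_ne_zero m hb) ht] using
    congrArg (·.factorization p) h

theorem mul_log_le_mul_log_of_pow_le_pow {a b : ℕ} {m n : ℕ} (hb : b ≠ 0) (h : b ^ m ≤ a ^ n) :
    m * log b ≤ n * log a := by
  rw [← log_pow, ← log_pow]
  exact log_le_log (by positivity) (by exact_mod_cast h)

theorem mul_sub_le_factorization_mul_log {a b t n m : ℕ} (p : ℕ) (hb : b ≠ 0) (ht : t ≠ 0)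
    (h : a ^ n = b ^ m * t) :
    n * (a.factorization p * log b - b.factorization p * log a)
      ≤ t.factorization p * log b := by
  have hval : (n * a.factorization p : ℝ) = m * b.factorization p + t.factorization p := by
    exact_mod_cast factorization_eq_of_pow_eq_pow_mul p hb ht h
  have hlog := mul_log_le_mul_log_of_pow_le_pow hb (h ▸ Nat.le_mul_of_pos_right _ (by omega))
  linear_combination log b * hval + (b.factorization p : ℝ) * hlog

theorem stmt_5 (a b : ℕ) (ha : 2 ≤ a) (hb : 2 ≤ b)
    (hirr : Irrational (Real.log a / Real.log b)) :
    ∃ p : ℕ, p.Prime ∧ p ∣ a ∧ ∃ C : ℝ, 0 < C ∧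
      ∀ n m t : ℕ, 1 ≤ t → a ^ n = b ^ m * t →
        (t.factorization p : ℝ) ≥ C * n := by
  obtain ⟨p, hp, hpa, hlt⟩ := exists_prime_dvd_factorization_mul_log_lt ha hb hirr
  have hlogb : 0 < log b := log_pos (by exact_mod_cast hb)
  refine ⟨p, hp, hpa, (a.factorization p * log b - b.factorization p * log a) / log b,
    div_pos (sub_pos.2 hlt) hlogb, fun n m t ht h => ?_⟩
  rw [ge_iff_le, div_mul_eq_mul_div, div_le_iff₀ hlogb, mul_comm]
  exact mul_sub_le_factorization_mul_log p (by omega) (by omega) h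
end

section
/- Let a, b ≥ 2 be integers. Let d be the smallest positive divisor of a such that gcd(a/d, b) = 1, and suppose that log(d)/log(b) is irrational. Then there exist a real constant C > 0 and a threshold n₀ (both depending only on a and b) such that for all integers n ≥ n₀, the number of nonzero digits in the base-b expansion of a^n satisfies c_b(a^n) > C · log(n). -/
lemma cnd_zero (b : ℕ) : countNonzeroDigits b 0 = 0 := by simp [countNonzeroDigits]

lemma cnd_step (b : ℕ) (hb : 1 < b) (N : ℕ) :
    countNonzeroDigits b N =
      (if N % b = 0 then 0 else 1) + countNonzeroDigits b (N / b) := by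
  rcases eq_or_ne N 0 with rfl | hN
  · simp [countNonzeroDigits]
  · rw [countNonzeroDigits, Nat.digits_def' hb (Nat.pos_of_ne_zero hN), List.filter_cons]
    by_cases h : N % b = 0 <;> simp [h, countNonzeroDigits, Nat.add_comm]

lemma cnd_one_digit (b : ℕ) (hb : 1 < b) (r : ℕ) (h0 : r ≠ 0) (hr : r < b) :
    countNonzeroDigits b r = 1 := by
  rw [cnd_step b hb r, Nat.mod_eq_of_lt hr, Nat.div_eq_of_lt hr, cnd_zero]
  simp [h0]

lemma cnd_split (b : ℕ) (hb : 1 < b) (e : ℕ) : ∀ N : ℕ,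
    countNonzeroDigits b N
      = countNonzeroDigits b (N % b ^ e) + countNonzeroDigits b (N / b ^ e) := by
  induction e with
  | zero => intro N; simp [cnd_zero, Nat.mod_one]
  | succ e ih =>
    intro N
    have hbdvd : b ∣ b ^ (e + 1) := dvd_pow_self b (Nat.succ_ne_zero e)
    have h1 : N % b ^ (e + 1) % b = N % b := Nat.mod_mod_of_dvd _ hbdvd
    have h2 : N % b ^ (e + 1) / b = N / b % b ^ e := by
      rw [pow_succ']
      exact Nat.mod_mul_right_div_self N b (b ^ e)
    have h3 : N / b ^ (e + 1) = N / b / b ^ e := by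
      rw [pow_succ', Nat.div_div_eq_div_mul]
    rw [cnd_step b hb N, cnd_step b hb (N % b ^ (e + 1)), h1, h2, ih (N / b), h3]
    ring

lemma descent (b p β : ℕ) (lam A B : ℝ) (hb : 1 < b) (hp : p.Prime)
    (hdvd : p ^ β ∣ b)
    (hlam0 : 0 < lam) (hlam1 : lam < 1)
    (hlam : lam = (β : ℝ) * Real.log p / Real.log b)
    (hB : B = (β : ℝ) / (1 - lam))
    (hA : A = lam * (Real.log b / Real.log p + B)) :
    ∀ N : ℕ, ∀ V : ℕ, N ≠ 0 → ¬ b ∣ N → p ^ V ∣ N →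
      ((V : ℝ) + B) * lam ^ (countNonzeroDigits b N) ≤ A := by
  have hlb : (0:ℝ) < Real.log b := Real.log_pos (by exact_mod_cast hb)
  have hlp : (0:ℝ) < Real.log p := Real.log_pos (by exact_mod_cast hp.one_lt)
  have h1l : (0:ℝ) < 1 - lam := by linarith
  have hBpos : 0 ≤ B := by
    rw [hB]; positivity
  intro N
  induction N using Nat.strong_induction_on with
  | _ N ih =>
    intro V hN0 hbN hpV
    set e := Nat.log b N with he
    have hbeN : b ^ e ≤ N := Nat.pow_log_le_self b hN0
    have hNbe : N < b ^ (e + 1) := Nat.lt_pow_succ_log_self hb N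
    have hpVN : p ^ V ≤ N := Nat.le_of_dvd (Nat.pos_of_ne_zero hN0) hpV
    -- V * log p < (e+1) * log b
    have hkey : (V : ℝ) * Real.log p < ((e : ℝ) + 1) * Real.log b := by
      have h1 : (p : ℝ) ^ V < (b : ℝ) ^ (e + 1) := by
        exact_mod_cast lt_of_le_of_lt hpVN hNbe
      have hppos : (0:ℝ) < (p:ℝ) := by exact_mod_cast hp.pos
      have h2 := Real.log_lt_log (pow_pos hppos V) h1
      rw [Real.log_pow, Real.log_pow] at h2
      exact_mod_cast h2
    rcases Nat.eq_zero_or_pos e with he0 | he1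
    · -- single digit
      have hNb : N < b := by simpa [he0] using hNbe
      have hc : countNonzeroDigits b N = 1 := cnd_one_digit b hb N hN0 hNb
      rw [hc, pow_one, hA]
      have hVle : (V : ℝ) ≤ Real.log b / Real.log p := by
        rw [le_div_iff₀ hlp]
        have : (V:ℝ) * Real.log p < (0 + 1) * Real.log b := by
          have : (e:ℝ) = 0 := by exact_mod_cast he0
          rw [this] at hkey; exact hkey
        linarith
      calc ((V:ℝ) + B) * lam ≤ (Real.log b / Real.log p + B) * lam :=
            mul_le_mul_of_nonneg_right (by linarith) hlam0.le
        _ = lam * (Real.log b / Real.log p + B) := by ring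
    · -- strip top digit
      set N₁ := N % b ^ e with hN₁def
      set V₁ := min V (β * e) with hV₁def
      have hbe1 : b ∣ b ^ e := dvd_pow_self b (by omega)
      have hN₁0 : N₁ ≠ 0 := by
        intro h0
        exact hbN (dvd_trans hbe1 (Nat.dvd_of_mod_eq_zero h0))
      have hsub : N₁ = N - b ^ e * (N / b ^ e) := by
        rw [hN₁def]
        nth_rewrite 2 [← Nat.div_add_mod N (b ^ e)]
        rw [Nat.add_sub_cancel_left]
      have hbN₁ : ¬ b ∣ N₁ := by
        intro hdb
        apply hbN
        have h2 : b ∣ b ^ e * (N / b ^ e) := hbe1.mul_right _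
        have := Nat.div_add_mod N (b ^ e)
        calc b ∣ b ^ e * (N / b ^ e) + N₁ := Nat.dvd_add h2 hdb
        _ = N := this
      have hpV₁ : p ^ V₁ ∣ N₁ := by
        rw [hsub]
        apply Nat.dvd_sub
        · exact dvd_trans (pow_dvd_pow p (min_le_left _ _)) hpV
        · have h1 : p ^ (β * e) ∣ b ^ e := by
            rw [pow_mul]; exact pow_dvd_pow_of_dvd hdvd e
          exact dvd_trans (pow_dvd_pow p (min_le_right _ _)) (h1.mul_right _)
      have hN₁lt : N₁ < N := lt_of_lt_of_le (Nat.mod_lt N (pow_pos (by omega) e)) hbeN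
      -- digit count
      have hdivpos : 1 ≤ N / b ^ e := (Nat.one_le_div_iff (pow_pos (by omega) e)).mpr hbeN
      have hdivlt : N / b ^ e < b := by
        rw [Nat.div_lt_iff_lt_mul (pow_pos (by omega) e)]
        calc N < b ^ (e + 1) := hNbe
        _ = b * b ^ e := by rw [pow_succ']
      have hcount : countNonzeroDigits b N = countNonzeroDigits b N₁ + 1 := by
        rw [cnd_split b hb e N, cnd_one_digit b hb _ (by omega) hdivlt]
      have IH := ih N₁ hN₁lt V₁ hN₁0 hbN₁ hpV₁
      rw [hcount, pow_succ]
      have hstep : ((V : ℝ) + B) * lam ≤ (V₁ : ℝ) + B := by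
        have hβR : (0:ℝ) < (β:ℝ) := by
          rcases Nat.eq_zero_or_pos β with h0 | h0
          · exfalso; rw [h0] at hlam; simp at hlam; rw [hlam] at hlam0; linarith
          · exact_mod_cast h0
        have hBl : B * (1 - lam) = (β:ℝ) := by
          rw [hB]; field_simp
        have hmain : lam * V ≤ (V₁ : ℝ) + β := by
          rcases le_total V (β * e) with hc | hc
          · have hv : V₁ = V := min_eq_left hc
            rw [hv]
            nlinarith [mul_nonneg (sub_nonneg.mpr hlam1.le) (Nat.cast_nonneg (α := ℝ) V)]
          · have hv1 : V₁ = β * e := min_eq_right hc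
            have : lam * V < (β : ℝ) * (e + 1) := by
              rw [hlam]
              rw [div_mul_eq_mul_div, div_lt_iff₀ hlb]
              nlinarith [mul_lt_mul_of_pos_left hkey hβR]
            rw [hv1]
            push_cast
            nlinarith
        nlinarith
      calc ((V : ℝ) + B) * (lam ^ countNonzeroDigits b N₁ * lam)
          = (((V : ℝ) + B) * lam) * lam ^ countNonzeroDigits b N₁ := by ring
        _ ≤ ((V₁ : ℝ) + B) * lam ^ countNonzeroDigits b N₁ := by
            apply mul_le_mul_of_nonneg_right hstep (pow_nonneg hlam0.le _)
        _ ≤ A := IH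

set_option maxHeartbeats 1000000 in
theorem stmt_6 (a b d : ℕ) (ha : 2 ≤ a) (hb : 2 ≤ b)
    (hd0 : 0 < d) (hdvd : d ∣ a) (hgcd : Nat.gcd (a / d) b = 1)
    (hmin : ∀ d' : ℕ, 0 < d' → d' ∣ a → Nat.gcd (a / d') b = 1 → d ≤ d')
    (hirr : Irrational (Real.log d / Real.log b)) :
    ∃ C : ℝ, 0 < C ∧ ∃ n₀ : ℕ, ∀ n : ℕ, n ≥ n₀ →
      (countNonzeroDigits b (a ^ n) : ℝ) > C * Real.log n := by
  have hb1 : 1 < b := hb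
  have hbne : b ≠ 0 := by omega
  have ha0 : a ≠ 0 := by omega
  have hadpos : 0 < a / d := Nat.div_pos (Nat.le_of_dvd (by omega) hdvd) hd0
  have hadne : a / d ≠ 0 := hadpos.ne'
  have hlb : (0:ℝ) < Real.log b := Real.log_pos (by exact_mod_cast hb1)
  -- F1 : for primes dividing b, the valuation of d equals that of a
  have F1 : ∀ r : ℕ, r.Prime → r ∣ b → d.factorization r = a.factorization r := by
    intro r hr hrb
    have hnd : ¬ r ∣ (a / d) := by
      intro hcon
      have h1 : r ∣ Nat.gcd (a / d) b := Nat.dvd_gcd hcon hrb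
      rw [hgcd] at h1
      have := Nat.le_of_dvd one_pos h1
      have := hr.two_le
      omega
    have hmul : d * (a / d) = a := Nat.mul_div_cancel' hdvd
    have h2 := Nat.factorization_mul hd0.ne' hadne
    rw [hmul] at h2
    rw [h2, Finsupp.add_apply, Nat.factorization_eq_zero_of_not_dvd hnd]
    simp
  -- F2 : every prime of d divides b
  have F2 : ∀ r : ℕ, r.Prime → r ∣ d → r ∣ b := by
    intro r hr hrd
    by_contra hrb
    have hd'pos : 0 < d / r := Nat.div_pos (Nat.le_of_dvd hd0 hrd) hr.pos
    have hd'dvd : d / r ∣ a := (Nat.div_dvd_of_dvd hrd).trans hdvd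
    have key : a / (d / r) = (a / d) * r := by
      apply Nat.div_eq_of_eq_mul_left hd'pos
      calc a = d * (a / d) := (Nat.mul_div_cancel' hdvd).symm
        _ = ((d / r) * r) * (a / d) := by rw [Nat.div_mul_cancel hrd]

        _ = ((a / d) * r) * (d / r) := by ring
    have hcop : Nat.gcd (a / (d / r)) b = 1 := by
      rw [key]
      exact Nat.Coprime.mul hgcd ((Nat.Prime.coprime_iff_not_dvd hr).mpr hrb)
    have h3 := hmin (d / r) hd'pos hd'dvd hcop
    have h4 : d / r < d := Nat.div_lt_self hd0 hr.one_lt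
    omega
  -- pair selection
  have hpair : ∃ p q : ℕ, p.Prime ∧ q.Prime ∧ p ∣ b ∧ q ∣ b ∧
      a.factorization q * b.factorization p < a.factorization p * b.factorization q := by
    have hne : ∃ r s : ℕ, r.Prime ∧ s.Prime ∧ r ∣ b ∧ s ∣ b ∧
        a.factorization r * b.factorization s ≠ a.factorization s * b.factorization r := by
      by_contra hcon
      push_neg at hcon
      by_cases hz : ∀ r : ℕ, r.Prime → r ∣ b → a.factorization r = 0
      · have hd1 : d = 1 := by
          apply Nat.eq_of_factorization_eq hd0.ne' one_ne_zero
          intro r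
          rw [Nat.factorization_one]
          simp only [Finsupp.coe_zero, Pi.zero_apply]
          by_cases hrp : r.Prime
          · by_cases hrb : r ∣ b
            · rw [F1 r hrp hrb]; exact hz r hrp hrb
            · exact Nat.factorization_eq_zero_of_not_dvd (fun h => hrb (F2 r hrp h))
          · exact Nat.factorization_eq_zero_of_not_prime _ hrp
        apply hirr.ne_zero
        rw [hd1]
        simp
      · push_neg at hz
        obtain ⟨p₀, hp₀, hp₀b, hα₀⟩ := hz
        have hβ₀pos : 0 < b.factorization p₀ := hp₀.factorization_pos_of_dvd hbne hp₀b
        have hdb : d ^ (b.factorization p₀) = b ^ (a.factorization p₀) := by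
          apply Nat.eq_of_factorization_eq (pow_ne_zero _ hd0.ne') (pow_ne_zero _ hbne)
          intro r
          rw [Nat.factorization_pow, Nat.factorization_pow]
          simp only [Finsupp.smul_apply, smul_eq_mul]
          by_cases hrp : r.Prime
          · by_cases hrb : r ∣ b
            · rw [F1 r hrp hrb]
              have h := hcon r p₀ hrp hp₀ hrb hp₀b
              -- h : a.f r * b.f p₀ = a.f p₀ * b.f r
              calc b.factorization p₀ * a.factorization r
                  = a.factorization r * b.factorization p₀ := by ring
                _ = a.factorization p₀ * b.factorization r := h
            · rw [Nat.factorization_eq_zero_of_not_dvd (fun h => hrb (F2 r hrp h)),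
                Nat.factorization_eq_zero_of_not_dvd hrb]
              ring
          · rw [Nat.factorization_eq_zero_of_not_prime _ hrp]
            rw [Nat.factorization_eq_zero_of_not_prime _ hrp]
            ring
        have hcast : ((d:ℝ)) ^ (b.factorization p₀) = ((b:ℝ)) ^ (a.factorization p₀) := by
          exact_mod_cast congrArg (fun k : ℕ => (k : ℝ)) hdb
        have hlogs : (b.factorization p₀ : ℝ) * Real.log d
            = (a.factorization p₀ : ℝ) * Real.log b := by
          have h := congrArg Real.log hcast
          rwa [Real.log_pow, Real.log_pow] at h
        rw [irrational_iff_ne_rational] at hirr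
        apply hirr (a.factorization p₀ : ℤ) (b.factorization p₀ : ℤ) (by exact_mod_cast hβ₀pos.ne')
        have hβ₀R : ((b.factorization p₀ : ℝ)) ≠ 0 := by
          exact_mod_cast hβ₀pos.ne'
        push_cast
        rw [div_eq_div_iff hlb.ne' hβ₀R]
        linarith [hlogs]
    obtain ⟨r, s, hr, hs, hrb, hsb, hne'⟩ := hne
    rcases hne'.lt_or_gt with h | h
    · exact ⟨s, r, hs, hr, hsb, hrb, h⟩
    · exact ⟨r, s, hr, hs, hrb, hsb, h⟩
  obtain ⟨p, q, hp, hq, hpb, hqb, hlt⟩ := hpair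
  have hβppos : 0 < b.factorization p := hp.factorization_pos_of_dvd hbne hpb
  have hβqpos : 0 < b.factorization q := hq.factorization_pos_of_dvd hbne hqb
  have hpq : p ≠ q := by
    intro h; rw [h] at hlt; exact lt_irrefl _ hlt
  have hordp : p ^ (b.factorization p) ∣ b := Nat.ordProj_dvd b p
  have hpowlt : p ^ (b.factorization p) < b := by
    have hcop : Nat.Coprime q (p ^ (b.factorization p)) :=
      ((Nat.coprime_primes hq hp).mpr hpq.symm).pow_right _
    have hmuldvd : q * p ^ (b.factorization p) ∣ b :=
      hcop.mul_dvd_of_dvd_of_dvd hqb hordp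
    have h1 : q * p ^ (b.factorization p) ≤ b := Nat.le_of_dvd (by omega) hmuldvd
    have h2 : 2 * p ^ (b.factorization p) ≤ q * p ^ (b.factorization p) :=
      Nat.mul_le_mul_right _ hq.two_le
    have h3 : 0 < p ^ (b.factorization p) := pow_pos hp.pos _
    omega
  have hlp : (0:ℝ) < Real.log p := Real.log_pos (by exact_mod_cast hp.one_lt)
  set lam := (b.factorization p : ℝ) * Real.log p / Real.log b with hlamdef
  have hβpR : (0:ℝ) < (b.factorization p : ℝ) := by exact_mod_cast hβppos
  have hβqR : (0:ℝ) < (b.factorization q : ℝ) := by exact_mod_cast hβqpos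
  have hlam0 : 0 < lam := div_pos (mul_pos hβpR hlp) hlb
  have hlam1 : lam < 1 := by
    rw [hlamdef, div_lt_one hlb]
    have h1 : ((p:ℝ)) ^ (b.factorization p) < (b:ℝ) := by exact_mod_cast hpowlt
    have h2 := Real.log_lt_log (pow_pos (by exact_mod_cast hp.pos) _) h1
    rwa [Real.log_pow] at h2
  have h1l : (0:ℝ) < 1 - lam := by linarith
  set B := (b.factorization p : ℝ) / (1 - lam) with hBdef
  set A := lam * (Real.log b / Real.log p + B) with hAdef
  have hBpos : 0 < B := div_pos hβpR h1l
  have hApos : 0 < A := by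
    apply mul_pos hlam0
    have := div_pos hlb hlp
    linarith
  set c := ((a.factorization p : ℝ) * (b.factorization q : ℝ)
      - (a.factorization q : ℝ) * (b.factorization p : ℝ)) / (b.factorization q : ℝ) with hcdef
  have hcpos : 0 < c := by
    apply div_pos _ hβqR
    have h : ((a.factorization q : ℝ)) * (b.factorization p : ℝ)
        < (a.factorization p : ℝ) * (b.factorization q : ℝ) := by exact_mod_cast hlt
    linarith
  set L := -Real.log lam with hLdef
  have hLpos : 0 < L := by
    have := Real.log_neg hlam0 hlam1
    rw [hLdef]; linarith
  refine ⟨1 / (2 * L), by positivity, max 2 (⌈Real.exp (2 * Real.log (A / c))⌉₊ + 1), ?_⟩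
  intro n hn
  have hn2 : 2 ≤ n := le_trans (le_max_left _ _) hn
  have hnR1 : (1:ℝ) ≤ (n:ℝ) := by exact_mod_cast (by omega : 1 ≤ n)
  have hnRpos : (0:ℝ) < (n:ℝ) := by linarith
  have hlogAc : 2 * Real.log (A / c) ≤ Real.log n := by
    have h2 : ((⌈Real.exp (2 * Real.log (A / c))⌉₊ + 1 : ℕ) : ℝ) ≤ (n:ℝ) := by
      exact_mod_cast le_trans (le_max_right _ _) hn
    have h1 : Real.exp (2 * Real.log (A / c)) ≤ (n:ℝ) := by
      calc Real.exp (2 * Real.log (A / c))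
          ≤ (⌈Real.exp (2 * Real.log (A / c))⌉₊ : ℝ) := Nat.le_ceil _
        _ ≤ ((⌈Real.exp (2 * Real.log (A / c))⌉₊ + 1 : ℕ) : ℝ) := by push_cast; linarith
        _ ≤ (n:ℝ) := h2
    calc 2 * Real.log (A / c) = Real.log (Real.exp (2 * Real.log (A / c))) :=
          (Real.log_exp _).symm
      _ ≤ Real.log n := Real.log_le_log (Real.exp_pos _) h1
  -- set up N = a^n / b^t
  have han0 : a ^ n ≠ 0 := pow_ne_zero _ ha0
  set t := Nat.maxPowDiv b (a ^ n) with htdef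
  have hbt : b ^ t ∣ a ^ n := Nat.maxPowDiv.pow_dvd
  set N := a ^ n / b ^ t with hNdef
  have hNfac : b ^ t * N = a ^ n := Nat.mul_div_cancel' hbt
  have hN0 : N ≠ 0 := by
    intro h; rw [h, mul_zero] at hNfac; exact han0 hNfac.symm
  have hbN : ¬ b ∣ N := by
    rintro ⟨m, hm⟩
    have hd1 : b ^ (t + 1) ∣ a ^ n := by
      refine ⟨m, ?_⟩
      rw [← hNfac, hm, pow_succ]; ring
    have : t + 1 ≤ t := (Nat.pow_dvd_iff_le_padicValNat hb1.ne' han0).mp hd1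
    omega
  have hkeq : countNonzeroDigits b (a ^ n) = countNonzeroDigits b N := by
    have hmod : a ^ n % b ^ t = 0 := by
      obtain ⟨m, hm⟩ := hbt
      rw [hm, Nat.mul_mod_right]
    rw [cnd_split b hb1 t (a ^ n), hmod, cnd_zero, hNdef]
    omega
  set V := N.factorization p with hVdef
  have hpV : p ^ V ∣ N := Nat.ordProj_dvd N p
  have hfacdiv : N.factorization = (a ^ n).factorization - (b ^ t).factorization :=
    Nat.factorization_div hbt
  have hfle := (Nat.factorization_le_iff_dvd (pow_ne_zero _ hbne) han0).mpr hbt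
  have hfp_an : (a ^ n).factorization p = n * a.factorization p := by
    rw [Nat.factorization_pow]; simp
  have hfq_an : (a ^ n).factorization q = n * a.factorization q := by
    rw [Nat.factorization_pow]; simp
  have hfp_bt : (b ^ t).factorization p = t * b.factorization p := by
    rw [Nat.factorization_pow]; simp
  have hfq_bt : (b ^ t).factorization q = t * b.factorization q := by
    rw [Nat.factorization_pow]; simp
  have hflep : t * b.factorization p ≤ n * a.factorization p := by
    have h := Finsupp.le_def.mp hfle p
    rwa [hfp_an, hfp_bt] at h
  have hfleq : t * b.factorization q ≤ n * a.factorization q := by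
    have h := Finsupp.le_def.mp hfle q
    rwa [hfq_an, hfq_bt] at h
  have hVval : V = n * a.factorization p - t * b.factorization p := by
    rw [hVdef, hfacdiv, Finsupp.tsub_apply, hfp_an, hfp_bt]
  have hVcast : (V:ℝ) = (n:ℝ) * (a.factorization p : ℝ) - (t:ℝ) * (b.factorization p : ℝ) := by
    rw [hVval, Nat.cast_sub hflep]; push_cast; ring
  have hVc : c * n ≤ (V:ℝ) := by
    have htq : (t:ℝ) * (b.factorization q : ℝ) ≤ (n:ℝ) * (a.factorization q : ℝ) := by
      exact_mod_cast hfleq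
    rw [hVcast, hcdef, div_mul_eq_mul_div, div_le_iff₀ hβqR]
    nlinarith [mul_le_mul_of_nonneg_right htq hβpR.le]
  have hdes := descent b p (b.factorization p) lam A B hb1 hp hordp hlam0 hlam1
    hlamdef hBdef hAdef N V hN0 hbN hpV
  rw [hkeq]
  set k := countNonzeroDigits b N with hkdef
  have h1 : c * n * lam ^ k < A := by
    have h2 : c * n < (V:ℝ) + B := by linarith
    calc c * n * lam ^ k < ((V:ℝ) + B) * lam ^ k :=
          mul_lt_mul_of_pos_right h2 (pow_pos hlam0 _)
      _ ≤ A := hdes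
  have hcn : (0:ℝ) < c * n := mul_pos hcpos hnRpos
  have h3 : lam ^ k < A / (c * n) := by
    rw [lt_div_iff₀ hcn]; linarith
  have h4 : (k:ℝ) * Real.log lam < Real.log (A / (c * n)) := by
    have h := Real.log_lt_log (pow_pos hlam0 k) h3
    rwa [Real.log_pow] at h
  have h5 : Real.log (A / (c * n)) = Real.log (A / c) - Real.log n := by
    rw [show A / (c * n) = A / c / n from by rw [div_div],
      Real.log_div (by positivity) hnRpos.ne']
  have hloglam : Real.log lam = -L := by rw [hLdef]; ring
  have h7 : Real.log n / 2 < (k:ℝ) * L := by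
    rw [hloglam] at h4
    linarith
  rw [gt_iff_lt, one_div_mul_eq_div, div_lt_iff₀ (by positivity : (0:ℝ) < 2 * L)]
  nlinarith [h7, hLpos]
end

section
/- Let m, r ≥ 1 and b ≥ 2 be integers. If m is divisible by b^r − 1, then the sum of the base-b digits of m satisfies s_b(m) ≥ (b−1)·r. -/
/-!
Writing `m = c + b ^ r * q` with `c < b ^ r`, the digits of `m` are those of `c` followed by those of
`q`, so `s_b(m) = s_b(c) + s_b(q) ≥ s_b(c + q)` by subadditivity of the digit sum. Since
`b ^ r ≡ 1 [MOD b ^ r - 1]`, the number `c + q` is again a positive multiple of `b ^ r - 1`, and it is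
smaller than `m` as long as `q ≠ 0`. Descending in this way we reach a multiple below `b ^ r`, which
can only be `b ^ r - 1`, whose `r` digits all equal `b - 1`.
-/

namespace Nat

open Finset

theorem digits_sum_add_sub_one_mul_sum_div_pow {b n K : ℕ} (hb : 1 < b) (hn : n < b ^ K) :
    (digits b n).sum + (b - 1) * ∑ i ∈ range K, n / b ^ (i + 1) = n := by
  rcases eq_or_ne n 0 with rfl | hn0
  · simp
  have hlog : (log b n).succ ≤ K := log_lt_of_lt_pow hn0 hn
  have hsum : ∑ i ∈ range (log b n).succ, n / b ^ (i + 1) = ∑ i ∈ range K, n / b ^ (i + 1) := by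
    refine sum_subset (range_subset_range.mpr hlog) fun i _ hi => div_eq_of_lt ?_
    exact (lt_pow_succ_log_self hb n).trans_le
      (pow_le_pow_right₀ hb.le (by simp only [mem_range] at hi; omega))
  rw [← hsum, sub_one_mul_sum_log_div_pow_eq_sub_sum_digits]
  have := digit_sum_le b n
  omega

theorem digits_sum_add_le {b : ℕ} (hb : 1 < b) (x y : ℕ) :
    (digits b (x + y)).sum ≤ (digits b x).sum + (digits b y).sum := by
  have hK : x + y < b ^ (x + y) := Nat.lt_pow_self hb
  have hx := digits_sum_add_sub_one_mul_sum_div_pow hb (n := x) (K := x + y) (by omega)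
  have hy := digits_sum_add_sub_one_mul_sum_div_pow hb (n := y) (K := x + y) (by omega)
  have hxy := digits_sum_add_sub_one_mul_sum_div_pow hb hK
  have hdiv : ∑ i ∈ range (x + y), x / b ^ (i + 1) + ∑ i ∈ range (x + y), y / b ^ (i + 1)
      ≤ ∑ i ∈ range (x + y), (x + y) / b ^ (i + 1) := by
    rw [← sum_add_distrib]
    exact sum_le_sum fun i _ => div_add_div_le_add_div
  have := Nat.mul_le_mul_left (b - 1) hdiv
  rw [Nat.mul_add] at this
  omega

theorem digits_sum_add_base_pow_mul {b r c : ℕ} (hb : 1 < b) (hc : c < b ^ r) (q : ℕ) :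
    (digits b (c + b ^ r * q)).sum = (digits b c).sum + (digits b q).sum := by
  rcases q.eq_zero_or_pos with rfl | hq
  · simp
  obtain ⟨k, rfl⟩ := exists_add_of_le ((digits_length_le_iff hb c).mpr hc)
  rw [← digits_append_zeroes_append_digits hb hq]
  simp

theorem digits_sum_mod_add_digits_sum_div {b : ℕ} (hb : 1 < b) (r m : ℕ) :
    (digits b (m % b ^ r)).sum + (digits b (m / b ^ r)).sum = (digits b m).sum := by
  rw [← digits_sum_add_base_pow_mul hb (mod_lt m (by positivity)), mod_add_div]

theorem digits_sum_base_pow_sub_one {b : ℕ} (hb : 1 < b) (r : ℕ) :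
    (digits b (b ^ r - 1)).sum = (b - 1) * r := by
  induction r with
  | zero => simp
  | succ r ih =>
    have hpos : 1 ≤ b ^ r := one_le_pow r b (by omega)
    have hsplit : b ^ (r + 1) - 1 = (b - 1) + b ^ 1 * (b ^ r - 1) := by
      rw [pow_one, Nat.mul_sub, mul_one, pow_succ']
      have : b ≤ b * b ^ r := Nat.le_mul_of_pos_right b hpos
      omega
    rw [hsplit, digits_sum_add_base_pow_mul hb (by rw [pow_one]; omega), ih,
      digits_of_lt b (b - 1) (by omega) (by omega)]
    simp only [List.sum_cons, List.sum_nil]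
    ring

theorem sub_one_dvd_mod_add_div {k m : ℕ} (h : k - 1 ∣ m) : k - 1 ∣ m % k + m / k := by
  rcases k.eq_zero_or_pos with rfl | hk
  · simp_all
  have hm : m = (m % k + m / k) + (k - 1) * (m / k) := by
    conv_lhs => rw [← mod_add_div m k]
    rw [Nat.sub_mul, one_mul, add_assoc, Nat.add_sub_cancel' (Nat.le_mul_of_pos_left _ hk)]
  rw [hm] at h
  exact (Nat.dvd_add_left (dvd_mul_right _ _)).mp h

theorem sub_one_mul_le_digits_sum_of_base_pow_sub_one_dvd {b r m : ℕ} (hb : 1 < b) (hm : 0 < m)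
    (hdvd : b ^ r - 1 ∣ m) : (b - 1) * r ≤ (digits b m).sum := by
  rcases r.eq_zero_or_pos with rfl | hr
  · simp
  have hpow : 2 ≤ b ^ r := le_self_pow₀ hb.le hr.ne' |>.trans' hb
  induction m using Nat.strong_induction_on with
  | _ m ih =>
  rcases lt_or_ge m (b ^ r) with hlt | hge
  · have : m = b ^ r - 1 := by have := le_of_dvd hm hdvd; omega
    rw [this, digits_sum_base_pow_sub_one hb]
  · have hq : 1 ≤ m / b ^ r := (one_le_div_iff (by omega)).mpr hge
    have hfold : m % b ^ r + m / b ^ r < m := by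
      have := mod_add_div m (b ^ r)
      have : 2 * (m / b ^ r) ≤ b ^ r * (m / b ^ r) := Nat.mul_le_mul_right _ hpow
      linarith
    calc (b - 1) * r ≤ (digits b (m % b ^ r + m / b ^ r)).sum :=
          ih _ hfold (hq.trans (Nat.le_add_left _ _)) (sub_one_dvd_mod_add_div hdvd)
      _ ≤ (digits b (m % b ^ r)).sum + (digits b (m / b ^ r)).sum := digits_sum_add_le hb _ _
      _ = (digits b m).sum := digits_sum_mod_add_digits_sum_div hb r m

end Nat

theorem stmt_7_general (b r m : ℕ) (hb : 2 ≤ b) (hm : 1 ≤ m)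
    (hdvd : (b ^ r - 1) ∣ m) :
    (Nat.digits b m).sum ≥ (b - 1) * r :=
  Nat.sub_one_mul_le_digits_sum_of_base_pow_sub_one_dvd hb hm hdvd

theorem stmt_7 (b r m : ℕ) (hb : 2 ≤ b) (hr : 1 ≤ r) (hm : 1 ≤ m)
    (hdvd : (b ^ r - 1) ∣ m) :
    (Nat.digits b m).sum ≥ (b - 1) * r :=
  stmt_7_general b r m hb hm hdvd
end

section
/- Let b ≥ 2 be an integer. Then there exists a real constant C > 0, depending only on b, such that for all integers n ≥ 2, the sum of the base-b digits of n! satisfies s_b(n!) > C · log(n). -/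
namespace Stmt10aux

def S (b n : ℕ) : ℕ := (Nat.digits b n).sum

lemma S_rec {b : ℕ} (hb : 2 ≤ b) (n : ℕ) : S b n = n % b + S b (n / b) := by
  rcases Nat.eq_zero_or_pos n with rfl | h
  · simp [S]
  · obtain ⟨b', rfl⟩ : ∃ b', b = b' + 2 := ⟨b - 2, by omega⟩
    obtain ⟨n', rfl⟩ : ∃ n', n = n' + 1 := ⟨n - 1, by omega⟩
    simp [S, Nat.digits_add_two_add_one]

lemma S_split {b : ℕ} (hb : 2 ≤ b) (q r : ℕ) (h : r < b) : S b (b * q + r) = r + S b q := by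
  rw [S_rec hb]
  have h1 : (b * q + r) % b = r := by
    rw [Nat.add_comm, Nat.add_mul_mod_self_left, Nat.mod_eq_of_lt h]
  have h2 : (b * q + r) / b = q := by
    rw [Nat.add_comm, Nat.add_mul_div_left _ _ (by omega : 0 < b), Nat.div_eq_of_lt h, Nat.zero_add]
  rw [h1, h2]

lemma S_succ_le {b : ℕ} (hb : 2 ≤ b) (x : ℕ) : S b (x + 1) ≤ S b x + 1 := by
  induction x using Nat.strong_induction_on with
  | _ x ih =>
    have hdm := Nat.div_add_mod x b
    have hrlt : x % b < b := Nat.mod_lt _ (by omega)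
    set q := x / b with hq
    set r := x % b with hr
    by_cases hcase : r + 1 < b
    · have h1 : x + 1 = b * q + (r + 1) := by omega
      have h2 : x = b * q + r := by omega
      rw [h1, S_split hb _ _ hcase, h2, S_split hb _ _ hrlt]
      omega
    · -- r = b - 1, so x + 1 = b * (q + 1)
      have hreq : r = b - 1 := by omega
      have h1 : x + 1 = b * (q + 1) + 0 := by
        have : b * (q + 1) = b * q + b := by ring
        omega
      have h2 : x = b * q + r := by omega
      have hqlt : q < x := by
        have : b * q ≥ q := Nat.le_mul_of_pos_left q (by omega)
        omega
      rw [h1, S_split hb _ _ (by omega : (0:ℕ) < b), h2, S_split hb _ _ hrlt]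
      have := ih q hqlt
      omega

lemma S_add_pow_le {b : ℕ} (hb : 2 ≤ b) (j : ℕ) : ∀ x, S b (x + b ^ j) ≤ S b x + 1 := by
  induction j with
  | zero => intro x; simpa using S_succ_le hb x
  | succ j ih =>
    intro x
    have hdm := Nat.div_add_mod x b
    have hrlt : x % b < b := Nat.mod_lt _ (by omega)
    have h1 : x + b ^ (j + 1) = b * (x / b + b ^ j) + x % b := by
      have e1 : b ^ (j+1) = b * b ^ j := by ring
      have e2 : b * (x / b + b ^ j) = b * (x / b) + b * b ^ j := by ring
      omega
    rw [h1, S_split hb _ _ hrlt]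
    have h2 : S b x = x % b + S b (x / b) := S_rec hb x
    have := ih (x / b)
    omega

lemma S_top {b : ℕ} (hb : 2 ≤ b) : ∀ e M, b ^ e ≤ M → M < b ^ (e + 1) → S b M = S b (M - b ^ e) + 1 := by
  intro e
  induction e with
  | zero =>
    intro M h1 h2
    rw [pow_zero] at h1
    rw [zero_add, pow_one] at h2
    rw [pow_zero]
    have hS0 : S b 0 = 0 := by simp [S]
    have v1 := S_split hb 0 M h2
    have v2 := S_split hb 0 (M - 1) (by omega)
    rw [Nat.mul_zero, Nat.zero_add] at v1 v2
    omega
  | succ e ih =>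
    intro M h1 h2
    have hdm := Nat.div_add_mod M b
    have hrlt : M % b < b := Nat.mod_lt _ (by omega)
    have hpow : b ^ (e + 1) = b * b ^ e := by ring
    have hpow2 : b ^ (e + 2) = b * b ^ (e + 1) := by ring
    have hq1 : b ^ e ≤ M / b := by
      rw [Nat.le_div_iff_mul_le (by omega : 0 < b)]
      calc b ^ e * b = b ^ (e+1) := by ring
        _ ≤ M := h1
    have hq2 : M / b < b ^ (e + 1) := by
      rw [Nat.div_lt_iff_lt_mul (by omega : 0 < b)]
      calc M < b ^ (e + 2) := h2
        _ = b ^ (e+1) * b := by ring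
    have hsub : M - b ^ (e + 1) = b * (M / b - b ^ e) + M % b := by
      have e2 : b * (M / b - b ^ e) = b * (M / b) - b * b ^ e := Nat.mul_sub b (M / b) (b ^ e)
      have e3 : b * b ^ e ≤ b * (M / b) := Nat.mul_le_mul_left b hq1
      omega
    have key : S b (M / b) = S b (M / b - b ^ e) + 1 := ih (M / b) hq1 hq2
    have hM : S b M = M % b + S b (M / b) := S_rec hb M
    rw [hsub, S_split hb _ _ hrlt]
    omega


lemma S_pow_sub_one {b : ℕ} (hb : 2 ≤ b) (k : ℕ) : S b (b ^ k - 1) = k * (b - 1) := by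
  induction k with
  | zero => simp [S]
  | succ k ih =>
    have hp : 1 ≤ b ^ k := Nat.one_le_pow _ _ (by omega)
    have e1 : b ^ (k + 1) - 1 = b * (b ^ k - 1) + (b - 1) := by
      have e2 : b * (b ^ k - 1) = b * b ^ k - b := Nat.mul_sub b (b ^ k) 1 ▸ (by rw [Nat.mul_one])
      have e3 : b ^ (k + 1) = b * b ^ k := by ring
      have e4 : b ≤ b * b ^ k := Nat.le_mul_of_pos_right b (by omega)
      omega
    rw [e1, S_split hb _ _ (by omega), ih]
    cases b with
    | zero => omega
    | succ b' => ring_nf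

lemma S_pos {b : ℕ} (hb : 2 ≤ b) : ∀ M, 0 < M → 1 ≤ S b M := by
  intro M
  induction M using Nat.strong_induction_on with
  | _ M ih =>
    intro hM
    rw [S_rec hb]
    rcases Nat.eq_zero_or_pos (M % b) with h | h
    · have hd : b ∣ M := Nat.dvd_of_mod_eq_zero h
      have h1 : b ≤ M := Nat.le_of_dvd hM hd
      have h2 : 0 < M / b := Nat.div_pos h1 (by omega)
      have h3 : M / b < M := Nat.div_lt_self hM (by omega)
      have := ih (M / b) h3 h2
      omega
    · omega

lemma S_multiple {b : ℕ} (hb : 2 ≤ b) (k : ℕ) : ∀ M, 0 < M → (b ^ k - 1) ∣ M → k ≤ S b M := by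
  intro M
  induction M using Nat.strong_induction_on with
  | _ M ih =>
    intro hM hdvd
    rcases Nat.eq_zero_or_pos k with rfl | hk
    · omega
    by_cases hcase : M < b ^ k
    · have h1 : b ^ k - 1 ≤ M := Nat.le_of_dvd hM hdvd
      have h2 : M = b ^ k - 1 := by omega
      rw [h2, S_pow_sub_one hb]
      have : 1 ≤ b - 1 := by omega
      calc k = k * 1 := by ring
        _ ≤ k * (b - 1) := Nat.mul_le_mul_left k this
    · push_neg at hcase
      set e := Nat.log b M with he
      have hMne : M ≠ 0 := by omega
      have hle : b ^ e ≤ M := Nat.pow_log_le_self b hMne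
      have hlt : M < b ^ (e + 1) := Nat.lt_pow_succ_log_self (by omega) M
      have hke : k ≤ e := by
        have : b ^ k < b ^ (e + 1) := lt_of_le_of_lt hcase hlt
        have := (Nat.pow_lt_pow_iff_right (by omega : 1 < b)).mp this
        omega
      have hpek : b ^ (e - k) * b ^ k = b ^ e := by
        rw [← pow_add]
        congr 1
        omega
      have hCeq : b ^ (e - k) * (b ^ k - 1) = b ^ e - b ^ (e - k) := by
        rw [Nat.mul_sub, Nat.mul_one, hpek]
      have hpos_ek : 0 < b ^ (e - k) := pow_pos (by omega) _
      have hlt_ek : b ^ (e - k) < b ^ e := by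
        apply Nat.pow_lt_pow_right (by omega : 1 < b)
        omega
      set M' := (M - b ^ e) + b ^ (e - k) with hM'
      have hM'lt : M' < M := by omega
      have hM'pos : 0 < M' := by omega
      have hM'dvd : (b ^ k - 1) ∣ M' := by
        have hsub : M' = M - b ^ (e - k) * (b ^ k - 1) := by omega
        rw [hsub]
        exact Nat.dvd_sub hdvd (Dvd.intro_left _ rfl)
      have ih' : k ≤ S b M' := ih M' hM'lt hM'pos hM'dvd
      have h1 : S b M = S b (M - b ^ e) + 1 := S_top hb e M hle hlt
      have h2 : S b M' ≤ S b (M - b ^ e) + 1 := S_add_pow_le hb (e - k) (M - b ^ e)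
      omega


end Stmt10aux

theorem stmt_10 (b : ℕ) (hb : 2 ≤ b) :
    ∃ C : ℝ, 0 < C ∧ ∀ n : ℕ, 2 ≤ n →
      ((Nat.digits b (Nat.factorial n)).sum : ℝ) > C * Real.log n := by
  have hb1 : (1:ℝ) < (b:ℝ) := by exact_mod_cast (by omega : 1 < b)
  have hlogb : 0 < Real.log b := Real.log_pos hb1
  refine ⟨1 / (2 * Real.log b), by positivity, ?_⟩
  intro n hn
  have hnpos : (0:ℝ) < (n:ℝ) := by exact_mod_cast (by omega : 0 < n)
  have hfacpos : 0 < Nat.factorial n := Nat.factorial_pos n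
  show ((Stmt10aux.S b (Nat.factorial n) : ℕ) : ℝ) > _
  by_cases hcase : n < b ^ 2
  · have hS : 1 ≤ Stmt10aux.S b (Nat.factorial n) := Stmt10aux.S_pos hb _ hfacpos
    have hlogn : Real.log n < 2 * Real.log b := by
      have h1 : (n:ℝ) < (b:ℝ) ^ 2 := by exact_mod_cast hcase
      have h2 := Real.log_lt_log hnpos h1
      rw [Real.log_pow] at h2
      push_cast at h2
      linarith
    have hC : (1 : ℝ) / (2 * Real.log b) * Real.log n < 1 := by
      rw [div_mul_eq_mul_div, one_mul, div_lt_one (by positivity)]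
      exact hlogn
    have hS' : (1:ℝ) ≤ ((Stmt10aux.S b (Nat.factorial n) : ℕ) : ℝ) := by exact_mod_cast hS
    linarith
  · push_neg at hcase
    set k := Nat.log b (n + 1) with hk
    have hbk_le : b ^ k ≤ n + 1 := Nat.pow_log_le_self b (by omega)
    have hlt : n + 1 < b ^ (k + 1) := Nat.lt_pow_succ_log_self (by omega) (n + 1)
    have hk2 : 2 ≤ k :=
      (Nat.le_log_iff_pow_le (by omega) (by omega)).mpr (by omega : b ^ 2 ≤ n + 1)
    have hbk2 : 2 ≤ b ^ k := le_trans hb (Nat.le_self_pow (by omega) b)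
    have hdvd : (b ^ k - 1) ∣ Nat.factorial n :=
      Nat.dvd_factorial (by omega) (by omega)
    have hS : k ≤ Stmt10aux.S b (Nat.factorial n) := Stmt10aux.S_multiple hb k _ hfacpos hdvd
    have h1 : Real.log n < ((k:ℝ) + 1) * Real.log b := by
      have hcast : (n:ℝ) < (b:ℝ) ^ (k + 1) := by exact_mod_cast (by omega : n < b ^ (k + 1))
      have h2 := Real.log_lt_log hnpos hcast
      rw [Real.log_pow] at h2
      push_cast at h2
      linarith
    have h3 : (1:ℝ) / (2 * Real.log b) * Real.log n < ((k:ℝ) + 1) / 2 := by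
      have h4 : (1:ℝ) / (2 * Real.log b) * Real.log n
          < (1:ℝ) / (2 * Real.log b) * (((k:ℝ) + 1) * Real.log b) :=
        mul_lt_mul_of_pos_left h1 (by positivity)
      have h5 : (1:ℝ) / (2 * Real.log b) * (((k:ℝ) + 1) * Real.log b) = ((k:ℝ) + 1) / 2 := by
        field_simp
      linarith
    have h6 : ((k:ℝ) + 1) / 2 ≤ (k:ℝ) := by
      have : (2:ℝ) ≤ (k:ℝ) := by exact_mod_cast hk2
      linarith
    have h7 : (k:ℝ) ≤ ((Stmt10aux.S b (Nat.factorial n) : ℕ) : ℝ) := by exact_mod_cast hS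
    linarith
end

section
/- Let b ≥ 2 be an integer. Then there exists a real constant C > 0, depending only on b, such that for all integers n ≥ 2, the sum of the base-b digits of Λ_n = lcm(1, 2, …, n) satisfies s_b(Λ_n) > C · log(n). -/
theorem my_sum_digits_add_le (b : ℕ) (hb : 2 ≤ b) :
    ∀ N m n : ℕ, m + n ≤ N →
      (Nat.digits b (m + n)).sum ≤ (Nat.digits b m).sum + (Nat.digits b n).sum := by
  intro N
  induction N using Nat.strong_induction_on with
  | _ N ih =>
    intro m n hmn
    rcases Nat.eq_zero_or_pos m with rfl | hm
    · simp
    rcases Nat.eq_zero_or_pos n with rfl | hn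
    · simp
    have hb1 : 1 < b := hb
    have hb0 : 0 < b := by omega
    have hpos : 0 < m + n := by omega
    set q1 := m / b with hq1
    set r1 := m % b with hr1
    set q2 := n / b with hq2
    set r2 := n % b with hr2
    have hm' : b * q1 + r1 = m := Nat.div_add_mod m b
    have hn' : b * q2 + r2 = n := Nat.div_add_mod n b
    have hr1b : r1 < b := Nat.mod_lt _ hb0
    have hr2b : r2 < b := Nat.mod_lt _ hb0
    have hsm : (Nat.digits b m).sum = r1 + (Nat.digits b q1).sum := by
      rw [Nat.digits_def' hb1 hm, List.sum_cons]
    have hsn : (Nat.digits b n).sum = r2 + (Nat.digits b q2).sum := by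
      rw [Nat.digits_def' hb1 hn, List.sum_cons]
    have hq1m : q1 < m := Nat.div_lt_self hm hb1
    have hq2n : q2 < n := Nat.div_lt_self hn hb1
    by_cases hcase : r1 + r2 < b
    · have hrepr : m + n = b * (q1 + q2) + (r1 + r2) := by
        rw [Nat.mul_add]; omega
      have hmod : (m + n) % b = r1 + r2 := by
        rw [hrepr, Nat.mul_add_mod, Nat.mod_eq_of_lt hcase]
      have hdiv : (m + n) / b = q1 + q2 := by
        rw [hrepr, Nat.mul_add_div hb0, Nat.div_eq_of_lt hcase, Nat.add_zero]
      rw [Nat.digits_def' hb1 hpos, List.sum_cons, hmod, hdiv, hsm, hsn]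
      have := ih (q1 + q2) (by omega) q1 q2 le_rfl
      omega
    · have hrepr : m + n = b * (q1 + q2 + 1) + (r1 + r2 - b) := by
        rw [Nat.mul_add, Nat.mul_add, Nat.mul_one]; omega
      have hlt : r1 + r2 - b < b := by omega
      have hmod : (m + n) % b = r1 + r2 - b := by
        rw [hrepr, Nat.mul_add_mod, Nat.mod_eq_of_lt hlt]
      have hdiv : (m + n) / b = q1 + q2 + 1 := by
        rw [hrepr, Nat.mul_add_div hb0, Nat.div_eq_of_lt hlt, Nat.add_zero]
      rw [Nat.digits_def' hb1 hpos, List.sum_cons, hmod, hdiv, hsm, hsn]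
      have h1 := ih (q1 + q2 + 1) (by omega) (q1 + q2) 1 le_rfl
      have h2 := ih (q1 + q2) (by omega) q1 q2 le_rfl
      have hone : (Nat.digits b 1).sum = 1 := by
        rw [Nat.digits_of_lt b 1 one_ne_zero hb1]; simp
      omega

theorem my_digits_pred_pow (b : ℕ) (hb : 2 ≤ b) (k : ℕ) :
    (Nat.digits b (b ^ k - 1)).sum = k * (b - 1) := by
  induction k with
  | zero => simp
  | succ k ihk =>
    have hb1 : 1 < b := hb
    have hbk : 1 ≤ b ^ k := Nat.one_le_pow _ _ (by omega)
    have hrepr : b ^ (k + 1) - 1 = b * (b ^ k - 1) + (b - 1) := by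
      have : b ^ (k + 1) = b * b ^ k := by ring
      have hbb : b ≤ b * b ^ k := Nat.le_mul_of_pos_right b hbk
      rw [this, Nat.mul_sub, Nat.mul_one]
      omega
    have hpos : 0 < b ^ (k + 1) - 1 := by
      have : b ≤ b ^ (k + 1) := Nat.le_self_pow (by omega) b
      omega
    rw [Nat.digits_def' hb1 hpos, List.sum_cons, hrepr, Nat.mul_add_mod,
      Nat.mod_eq_of_lt (by omega), Nat.mul_add_div (by omega : 0 < b),
      Nat.div_eq_of_lt (by omega), Nat.add_zero, ihk]
    ring

theorem my_digits_split (b : ℕ) (hb : 2 ≤ b) (k q r : ℕ) (hr : r < b ^ k) :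
    (Nat.digits b (b ^ k * q + r)).sum = (Nat.digits b q).sum + (Nat.digits b r).sum := by
  have hb1 : 1 < b := hb
  rcases Nat.eq_zero_or_pos q with rfl | hq
  · simp
  have hlen : (Nat.digits b r).length ≤ k := by
    rcases Nat.eq_zero_or_pos r with rfl | hr0
    · simp
    rw [Nat.digits_len b r hb1 (by omega)]
    have : Nat.log b r < k := Nat.log_lt_of_lt_pow (by omega) hr
    omega
  have h := Nat.digits_append_zeroes_append_digits (b := b) (k := k - (Nat.digits b r).length)
      (m := q) (n := r) hb1 hq
  rw [show (Nat.digits b r).length + (k - (Nat.digits b r).length) = k by omega] at h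
  rw [show b ^ k * q + r = r + b ^ k * q by ring, ← h]
  simp [List.sum_append, add_comm]

theorem my_key (b : ℕ) (hb : 2 ≤ b) (k : ℕ) (hk : 1 ≤ k) :
    ∀ N : ℕ, 0 < N → (b ^ k - 1) ∣ N → k ≤ (Nat.digits b N).sum := by
  intro N
  induction N using Nat.strong_induction_on with
  | _ N ih =>
    intro hN hdvd
    have hb1 : 1 < b := hb
    have hbk : 2 ≤ b ^ k := by
      calc 2 ≤ b := hb
      _ = b ^ 1 := (pow_one b).symm
      _ ≤ b ^ k := Nat.pow_le_pow_right (by omega) hk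
    have hm1 : 1 ≤ b ^ k - 1 := by omega
    by_cases hlt : N < b ^ k
    · have hle : b ^ k - 1 ≤ N := Nat.le_of_dvd hN hdvd
      have : N = b ^ k - 1 := by omega
      rw [this, my_digits_pred_pow b hb k]
      calc k = k * 1 := (mul_one k).symm
      _ ≤ k * (b - 1) := Nat.mul_le_mul_left k (by omega)
    · obtain ⟨q, r, hNr, hrb⟩ : ∃ q r, N = b ^ k * q + r ∧ r < b ^ k :=
        ⟨N / b ^ k, N % b ^ k, (Nat.div_add_mod N (b ^ k)).symm, Nat.mod_lt _ (by omega)⟩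
      rcases Nat.eq_zero_or_pos q with rfl | hq1
      · simp at hNr; omega
      have hmul : q * (b ^ k - 1) + q = b ^ k * q := by
        rw [Nat.mul_sub, Nat.mul_one, Nat.mul_comm]
        have : q ≤ b ^ k * q := Nat.le_mul_of_pos_left q (by omega)
        omega
      have hrepr : N = q * (b ^ k - 1) + (q + r) := by omega
      have hdvd' : (b ^ k - 1) ∣ (q + r) :=
        (Nat.dvd_add_right (dvd_mul_left (b ^ k - 1) q)).mp (hrepr ▸ hdvd)
      have hqlt : q < b ^ k * q := by
        have h1q : 1 * q < b ^ k * q :=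
          Nat.mul_lt_mul_of_lt_of_le (by omega) le_rfl (by omega)
        omega
      have hlt' : q + r < N := by omega
      have h1 : k ≤ (Nat.digits b (q + r)).sum := ih (q + r) hlt' (by omega) hdvd'
      have h2 := my_sum_digits_add_le b hb (q + r) q r le_rfl
      have h3 := my_digits_split b hb k q r hrb
      rw [hNr]
      omega

theorem my_pos_sum (b : ℕ) (hb : 2 ≤ b) (N : ℕ) (hN : N ≠ 0) :
    1 ≤ (Nat.digits b N).sum := by
  have h := Nat.getLast_digit_ne_zero b hN
  have hmem := List.getLast_mem (l := Nat.digits b N) (Nat.digits_ne_nil_iff_ne_zero.mpr hN)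
  have := List.single_le_sum (l := Nat.digits b N) (fun x _ => Nat.zero_le x) _ hmem
  omega

theorem stmt_11 (b : ℕ) (hb : 2 ≤ b) :
    ∃ C : ℝ, 0 < C ∧ ∀ n : ℕ, 2 ≤ n →
      ((Nat.digits b ((Finset.Icc 1 n).lcm id)).sum : ℝ) > C * Real.log n := by
  have hb1 : 1 < b := hb
  have hlogb : 0 < Real.log b := Real.log_pos (by exact_mod_cast hb1)
  refine ⟨1 / (3 * Real.log b), by positivity, ?_⟩
  intro n hn
  set Λ := (Finset.Icc 1 n).lcm id with hΛ
  have hΛ0 : Λ ≠ 0 := by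
    rw [hΛ]
    intro h
    rw [Finset.lcm_eq_zero_iff] at h
    obtain ⟨x, hx, hx0⟩ := h
    simp only [Finset.coe_Icc, Set.mem_Icc, Finset.mem_Icc] at hx
    simp only [id] at hx0
    omega
  have hn0 : (0:ℝ) < (n:ℝ) := by positivity
  set k := Nat.log b (n + 1) with hk
  have hk1 : b ^ k ≤ n + 1 := Nat.pow_log_le_self b (by omega)
  have hk2 : n + 1 < b ^ (k + 1) := Nat.lt_pow_succ_log_self hb1 (n + 1)
  rcases Nat.eq_zero_or_pos k with hk0 | hkpos
  · -- n + 1 < b, so n < b; digit sum ≥ 1 > C log n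
    rw [hk0] at hk2
    have hnb : (n:ℝ) < (b:ℝ) := by
      have : n + 1 < b ^ 1 := hk2
      rw [pow_one] at this
      exact_mod_cast (by omega : n < b)
    have hs : 1 ≤ (Nat.digits b Λ).sum := my_pos_sum b hb Λ hΛ0
    have hlog : Real.log n < Real.log b := Real.log_lt_log hn0 hnb
    have h2 : 1 / (3 * Real.log b) * Real.log n < 1 / (3 * Real.log b) * Real.log b := by
      apply mul_lt_mul_of_pos_left hlog (by positivity)
    have h3 : 1 / (3 * Real.log b) * Real.log b = 1 / 3 := by
      field_simp
    calc 1 / (3 * Real.log b) * Real.log n < 1 / 3 := by rw [← h3]; exact h2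
    _ < 1 := by norm_num
    _ ≤ ((Nat.digits b Λ).sum : ℝ) := by exact_mod_cast hs
  · -- main case
    have hm1 : 1 ≤ b ^ k - 1 := by
      have : b ≤ b ^ k := by
        calc b = b ^ 1 := (pow_one b).symm
        _ ≤ b ^ k := Nat.pow_le_pow_right (by omega) hkpos
      omega
    have hdvd : (b ^ k - 1) ∣ Λ := by
      apply Finset.dvd_lcm (f := id) (b := b ^ k - 1)
      rw [Finset.mem_Icc]
      omega
    have hs : k ≤ (Nat.digits b Λ).sum :=
      my_key b hb k hkpos Λ (by omega) hdvd
    have hnlt : (n:ℝ) < (b:ℝ) ^ (k + 1) := by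
      have : n < b ^ (k + 1) := by omega
      exact_mod_cast this
    have hlog : Real.log n < (k + 1 : ℝ) * Real.log b := by
      calc Real.log n < Real.log ((b:ℝ) ^ (k + 1)) := Real.log_lt_log hn0 hnlt
      _ = (k + 1 : ℝ) * Real.log b := by
        rw [Real.log_pow]; push_cast; ring
    have h2 : 1 / (3 * Real.log b) * Real.log n < (k + 1 : ℝ) / 3 := by
      have := mul_lt_mul_of_pos_left hlog (show (0:ℝ) < 1 / (3 * Real.log b) by positivity)
      calc 1 / (3 * Real.log b) * Real.log n
          < 1 / (3 * Real.log b) * ((k + 1 : ℝ) * Real.log b) := this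
      _ = (k + 1 : ℝ) / 3 := by field_simp
    have h3 : (k + 1 : ℝ) / 3 ≤ (k : ℝ) := by
      have : (k:ℝ) ≥ 1 := by exact_mod_cast hkpos
      linarith
    calc 1 / (3 * Real.log b) * Real.log n < (k + 1 : ℝ) / 3 := h2
    _ ≤ (k : ℝ) := h3
    _ ≤ ((Nat.digits b Λ).sum : ℝ) := by exact_mod_cast hs
end

section
/- Let a, b ≥ 2 be integers with log(a)/log(b) irrational. Then there exist positive real constants C and C', depending only on a and b, such that whenever n ≥ 1 and r ≥ 0 are integers and t ≥ 1 is an integer with a^n = b^r · t, one has C·n ≤ log(t) ≤ C'·n. -/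
theorem stmt_12 (a b : ℕ) (ha : 2 ≤ a) (hb : 2 ≤ b)
    (hirr : Irrational (Real.log a / Real.log b)) :
    ∃ C C' : ℝ, 0 < C ∧ 0 < C' ∧
      ∀ n r t : ℕ, 1 ≤ n → 1 ≤ t → a ^ n = b ^ r * t →
        C * n ≤ Real.log t ∧ Real.log t ≤ C' * n := by
  have ha0 : a ≠ 0 := by omega
  have hb0 : b ≠ 0 := by omega
  have hla : 0 < Real.log a := Real.log_pos (by exact_mod_cast (by omega : 1 < a))
  have hlb : 0 < Real.log b := Real.log_pos (by exact_mod_cast (by omega : 1 < b))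
  -- pick prime q | b minimizing v_q(a)/v_q(b)
  obtain ⟨q, hqmem, hqmin⟩ := Finset.exists_min_image b.primeFactors
    (fun p => ((a.factorization p : ℚ) / (b.factorization p : ℚ)))
    (Nat.nonempty_primeFactors.mpr (by omega))
  set va := a.factorization q with hva
  set vb := b.factorization q with hvb
  have hvb0 : 0 < vb := by
    have := Nat.support_factorization b ▸ hqmem
    exact Nat.pos_of_ne_zero (Finsupp.mem_support_iff.mp this)
  -- key: for all p, va * v_p(b) ≤ v_p(a) * vb
  have key : ∀ p, va * b.factorization p ≤ a.factorization p * vb := by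
    intro p
    by_cases hp : p ∈ b.primeFactors
    · have hpb : 0 < b.factorization p := by
        have := Nat.support_factorization b ▸ hp
        exact Nat.pos_of_ne_zero (Finsupp.mem_support_iff.mp this)
      have h := hqmin p hp
      rw [div_le_div_iff₀ (by exact_mod_cast hvb0) (by exact_mod_cast hpb)] at h
      exact_mod_cast h
    · have : b.factorization p = 0 := by
        by_contra h
        exact hp (Nat.support_factorization b ▸ Finsupp.mem_support_iff.mpr h)
      simp [this]
  -- divisibility b^va ∣ a^vb
  have hdvd : b ^ va ∣ a ^ vb := by
    rw [← Nat.factorization_le_iff_dvd (pow_ne_zero _ hb0) (pow_ne_zero _ ha0)]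
    intro p
    simp only [Nat.factorization_pow, Finsupp.smul_apply, smul_eq_mul]
    calc va * b.factorization p ≤ a.factorization p * vb := key p
      _ = vb * a.factorization p := mul_comm _ _
  have hle : (va : ℝ) * Real.log b ≤ (vb : ℝ) * Real.log a := by
    have h1 : b ^ va ≤ a ^ vb := Nat.le_of_dvd (pow_pos (by omega) _) hdvd
    have h2 : Real.log ((b : ℝ) ^ va) ≤ Real.log ((a : ℝ) ^ vb) := by
      apply Real.log_le_log (by positivity)
      exact_mod_cast h1
    rwa [Real.log_pow, Real.log_pow] at h2
  have hlt : (va : ℝ) * Real.log b < (vb : ℝ) * Real.log a := by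
    rcases lt_or_eq_of_le hle with h | h
    · exact h
    · exfalso
      apply hirr
      refine ⟨(va : ℚ) / (vb : ℚ), ?_⟩
      have hvbR : (vb : ℝ) ≠ 0 := by exact_mod_cast hvb0.ne'
      push_cast
      rw [div_eq_div_iff hvbR hlb.ne']
      linarith [h]
  set C0 : ℝ := (va : ℝ) / (vb : ℝ) with hC0
  have hvbR : (0:ℝ) < (vb : ℝ) := by exact_mod_cast hvb0
  have hvaeq : (va : ℝ) = C0 * vb := by rw [hC0, div_mul_cancel₀ _ hvbR.ne']
  refine ⟨Real.log a - C0 * Real.log b, Real.log a, ?_, hla, ?_⟩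
  · have : C0 * Real.log b < Real.log a := by
      rw [hC0, div_mul_eq_mul_div, div_lt_iff₀ hvbR]
      linarith
    linarith
  intro n r t hn ht heq
  have ht0 : (0:ℝ) < (t : ℝ) := by exact_mod_cast ht
  have hcast : (a : ℝ) ^ n = (b : ℝ) ^ r * t := by exact_mod_cast congrArg (Nat.cast : ℕ → ℝ) heq
  have hlog : (n : ℝ) * Real.log a = r * Real.log b + Real.log t := by
    have := congrArg Real.log hcast
    rw [Real.log_pow, Real.log_mul (by positivity) ht0.ne', Real.log_pow] at this
    exact this
  have hdvd2 : b ^ r ∣ a ^ n := ⟨t, heq⟩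
  have hrle : r * vb ≤ n * va := by
    have h := (Nat.factorization_le_iff_dvd (pow_ne_zero _ hb0) (pow_ne_zero _ ha0)).mpr hdvd2
    have h2 := h q
    simpa only [Nat.factorization_pow, Finsupp.smul_apply, smul_eq_mul] using h2
  have hrle' : (r : ℝ) ≤ (n : ℝ) * C0 := by
    rw [← mul_le_mul_iff_of_pos_right hvbR]
    have : (r : ℝ) * vb ≤ (n : ℝ) * va := by exact_mod_cast hrle
    calc (r:ℝ) * vb ≤ (n:ℝ) * va := this
      _ = (n:ℝ) * C0 * vb := by rw [hvaeq]; ring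
  constructor
  · have h1 : (r : ℝ) * Real.log b ≤ (n : ℝ) * C0 * Real.log b :=
      mul_le_mul_of_nonneg_right hrle' hlb.le
    nlinarith [hlog]
  · have h2 : (0:ℝ) ≤ (r : ℝ) * Real.log b := by positivity
    nlinarith [hlog]
end

section
/- For every positive integer n, there exists a nonnegative integer k such that 3^n divides 10^k + 8. In particular, every power of 3 has a multiple whose decimal expansion has exactly two nonzero digits. -/
/-!
Since `v₃(10 - 1) = 2`, lifting the exponent gives `v₃(10^(3^j) - 1) = j + 2`, so `10` has order
exactly `3^n` modulo `3^(n+2)`. The kernel of the reduction `(ℤ/3^(n+2))ˣ → (ℤ/9)ˣ` also has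
`3^n` elements and contains `10`, so `10` generates it. As `-8 ≡ 1 (mod 9)`, `-8` lies in that
kernel and is therefore a power of `10` modulo `3^(n+2)`.
-/

open ZMod Subgroup

section

variable {p : ℕ} [Fact p.Prime]

lemma padicValNat_pow_prime_pow_sub_one (hp : Odd p) {a : ℕ} (ha : p ∣ a - 1) (ha1 : 1 < a)
    (j : ℕ) : padicValNat p (a ^ p ^ j - 1) = padicValNat p (a - 1) + j := by
  have hpa : ¬p ∣ a := fun h ↦ (Fact.out : p.Prime).one_lt.ne'
    (Nat.dvd_one.mp (by simpa [Nat.sub_sub_self ha1.le] using Nat.dvd_sub h ha))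
  simpa using padicValNat.pow_sub_pow hp ha1 ha hpa (pow_ne_zero j (Fact.out : p.Prime).ne_zero)

lemma ZMod.natCast_pow_eq_one_iff {n a : ℕ} (ha : 0 < a) (j : ℕ) :
    (a : ZMod n) ^ j = 1 ↔ n ∣ a ^ j - 1 := by
  rw [← Nat.cast_pow, ← Nat.cast_one, ZMod.natCast_eq_natCast_iff, Nat.ModEq.comm,
    Nat.modEq_iff_dvd' (Nat.one_le_pow _ _ ha)]

lemma ZMod.orderOf_natCast_of_padicValNat_sub_one (hp : Odd p) {a e : ℕ} (he : 0 < e)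
    (ha : padicValNat p (a - 1) = e) (m : ℕ) : orderOf (a : ZMod (p ^ (m + e))) = p ^ m := by
  have ha1 : 1 < a := by
    by_contra! h
    simp [Nat.sub_eq_zero_of_le h, ← ha] at he
  have hdvd : p ∣ a - 1 := dvd_of_one_le_padicValNat (ha ▸ he)
  have hpow (j : ℕ) : (a : ZMod (p ^ (m + e))) ^ p ^ j = 1 ↔ m ≤ j := by
    rw [ZMod.natCast_pow_eq_one_iff (by omega), padicValNat_dvd_iff_le,
      padicValNat_pow_prime_pow_sub_one hp hdvd ha1, ha]
    · omega
    · exact Nat.sub_ne_zero_of_lt (Nat.one_lt_pow (pow_ne_zero _ (Fact.out : p.Prime).ne_zero) ha1)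
  cases m with
  | zero => simpa [orderOf_eq_one_iff] using hpow 0
  | succ k => exact orderOf_eq_prime_pow (by simp [hpow]) (by simp [hpow])

lemma ZMod.card_ker_unitsMap_prime_pow {e : ℕ} (he : 0 < e) (m : ℕ) :
    Nat.card (unitsMap (pow_dvd_pow p (Nat.le_add_left e m))).ker = p ^ m := by
  have hp := (Fact.out : p.Prime)
  have hsurj := unitsMap_surjective (m := p ^ (m + e)) (pow_dvd_pow p (Nat.le_add_left e m))
  have hcard := card_mul_index (unitsMap (pow_dvd_pow p (Nat.le_add_left e m))).ker
  simp only [index_ker, MonoidHom.range_eq_top.mpr hsurj, card_top,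
    Nat.card_eq_fintype_card (α := (ZMod _)ˣ), ZMod.card_units_eq_totient] at hcard
  rw [Nat.totient_prime_pow hp he, Nat.totient_prime_pow hp (by omega)] at hcard
  refine Nat.eq_of_mul_eq_mul_right
    (Nat.mul_pos (pow_pos hp.pos (e - 1)) (Nat.sub_pos_of_lt hp.one_lt)) ?_
  rw [hcard, ← mul_assoc, ← pow_add]
  congr 2
  omega

theorem ZMod.exists_natCast_pow_eq_of_unitsMap_eq_one (hp : Odd p) {a e : ℕ} (he : 0 < e)
    (ha : padicValNat p (a - 1) = e) (m : ℕ) {b : (ZMod (p ^ (m + e)))ˣ}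
    (hb : unitsMap (pow_dvd_pow p (Nat.le_add_left e m)) b = 1) :
    ∃ k : ℕ, (a : ZMod (p ^ (m + e))) ^ k = b := by
  have hord := ZMod.orderOf_natCast_of_padicValNat_sub_one hp he ha m
  have hunit : IsUnit (a : ZMod (p ^ (m + e))) :=
    IsUnit.of_pow_eq_one (pow_orderOf_eq_one _) (hord ▸ (pow_pos (Fact.out : p.Prime).pos m).ne')
  have hker : hunit.unit ∈ (unitsMap (pow_dvd_pow p (Nat.le_add_left e m))).ker := by
    refine Units.ext ?_
    rw [unitsMap_val, IsUnit.unit_spec, ZMod.cast_natCast (pow_dvd_pow p (Nat.le_add_left e m)),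
      Units.val_one, ← pow_one (a : ZMod (p ^ e)), ZMod.natCast_pow_eq_one_iff, pow_one, ← ha]
    · exact pow_padicValNat_dvd
    · exact Nat.pos_of_ne_zero (by rintro rfl; simp [← ha] at he)
  have hgen : zpowers hunit.unit = (unitsMap (pow_dvd_pow p (Nat.le_add_left e m))).ker :=
    eq_of_le_of_card_ge (zpowers_le.mpr hker) (by
      rw [Nat.card_zpowers, ZMod.card_ker_unitsMap_prime_pow he, ← orderOf_units,
        hunit.unit_spec, hord])
  obtain ⟨k, hk⟩ := mem_powers_iff_mem_zpowers.mpr (hgen ▸ MonoidHom.mem_ker.mpr hb)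
  exact ⟨k, by rw [← hunit.unit_spec, ← Units.val_pow_eq_pow_val]; exact congrArg Units.val hk⟩

end

theorem stmt_17_general (n : ℕ) :
    ∃ k : ℕ, 3 ^ n ∣ 10 ^ k + 8 := by
  have h10 : padicValNat 3 (10 - 1) = 2 := by simpa using padicValNat.prime_pow (p := 3) 2
  let b : (ZMod (3 ^ (n + 2)))ˣ := -unitOfCoprime 8 (Nat.Coprime.pow_right _ (by norm_num))
  have hb : unitsMap (pow_dvd_pow 3 (Nat.le_add_left 2 n)) b = 1 := Units.ext <| by
    simp only [b, unitsMap_val, Units.val_neg, unitOfCoprime, Units.val_one,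
      ZMod.cast_neg (pow_dvd_pow 3 (Nat.le_add_left 2 n)),
      ZMod.cast_natCast (pow_dvd_pow 3 (Nat.le_add_left 2 n))]
    decide
  obtain ⟨k, hk⟩ := ZMod.exists_natCast_pow_eq_of_unitsMap_eq_one (by decide) two_pos h10 n hb
  refine ⟨k, (pow_dvd_pow 3 (Nat.le_add_right n 2)).trans ?_⟩
  rw [← ZMod.natCast_eq_zero_iff]
  push_cast at hk ⊢
  simp [hk, b]

theorem stmt_17 (n : ℕ) (hn : 0 < n) :
    ∃ k : ℕ, 3 ^ n ∣ 10 ^ k + 8 :=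
  stmt_17_general n
end

section
/- Let b ≥ 2 and r ≥ 1 be integers, and let r' = log(b)/log(a) for integers 2 ≤ a < b with a dividing b; define the sequence (e_k) by e_1 = 1 and e_k = ⌈r'·e_{k-1}⌉ for k ≥ 2, where r' = log(b)/log(a). Then for every k ≥ 1, e_k < r'^k / (r' − 1). -/
open Finset

theorem one_lt_log_div_log {a b : ℝ} (ha : 1 < a) (hab : a < b) :
    1 < Real.log b / Real.log a := by
  rw [one_lt_div (Real.log_pos ha)]
  exact Real.log_lt_log (by linarith) hab

theorem geom_sum_lt_pow_div_sub_one {r : ℝ} (hr : 1 < r) (k : ℕ) :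
    ∑ i ∈ range k, r ^ i < r ^ k / (r - 1) := by
  rw [geom_sum_eq hr.ne']
  exact div_lt_div_of_pos_right (by linarith) (by linarith)

/-- Since `⌈x⌉₊ < x + 1`, each step multiplies by `r` and adds less than one, as
the geometric sum does (`geom_sum_succ`). -/
theorem cast_le_geom_sum_of_ceil_mul {r : ℝ} (hr : 0 ≤ r) (e : ℕ → ℕ) (he1 : e 1 = 1)
    (hstep : ∀ k ≥ 2, e k = ⌈r * (e (k - 1) : ℝ)⌉₊) :
    ∀ k ≥ 1, (e k : ℝ) ≤ ∑ i ∈ range k, r ^ i := by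
  intro k hk
  induction k, hk using Nat.le_induction with
  | base => simp [he1]
  | succ n hn ih =>
    have hceil : (e (n + 1) : ℝ) < r * e n + 1 := by
      rw [hstep (n + 1) (by omega), Nat.add_sub_cancel]
      exact Nat.ceil_lt_add_one (by positivity)
    rw [geom_sum_succ]
    nlinarith

theorem stmt_18_general (a b : ℕ) (ha : 2 ≤ a) (hab : a < b)
    (r' : ℝ) (hr' : r' = Real.log b / Real.log a)
    (e : ℕ → ℕ) (he1 : e 1 = 1)
    (hstep : ∀ k ≥ 2, e k = ⌈r' * (e (k - 1) : ℝ)⌉₊) :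
    ∀ k : ℕ, 1 ≤ k → (e k : ℝ) < r' ^ k / (r' - 1) := by
  have hr : 1 < r' := hr' ▸ one_lt_log_div_log (by exact_mod_cast ha) (by exact_mod_cast hab)
  intro k hk
  exact (cast_le_geom_sum_of_ceil_mul (by linarith) e he1 hstep k hk).trans_lt
    (geom_sum_lt_pow_div_sub_one hr k)

theorem stmt_18 (a b : ℕ) (ha : 2 ≤ a) (hab : a < b) (hdvd : a ∣ b)
    (r' : ℝ) (hr' : r' = Real.log b / Real.log a)
    (e : ℕ → ℕ) (he1 : e 1 = 1)
    (hstep : ∀ k ≥ 2, e k = ⌈r' * (e (k - 1) : ℝ)⌉₊) :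
    ∀ k : ℕ, 1 ≤ k → (e k : ℝ) < r' ^ k / (r' - 1) :=
  stmt_18_general a b ha hab r' hr' e he1 hstep
end
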